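/- arXiv:2207.10468 — 6 statements merged into one kernel-verified Lean document; each statement's English description precedes it below -/
import Mathlib

section
/- If h is a quasisymmetric homeomorphism of the real line with quasisymmetry constant M ≥ 1 (i.e., 1/M ≤ (h(x+t)-h(x))/(h(x)-h(x-t)) ≤ M for all x ∈ ℝ, t > 0), then the measure m_h(E) = |h(E)| is doubling: m_h([x-2t, x+2t]) ≤ (M² + M) · m_h([x-t, x+t]) for all x ∈ ℝ and t > 0 (indeed, some constant M' depending only on M works). -/
open MeasureTheory

lemma image_Icc_of_mono (h : ℝ → ℝ) (hmono : StrictMono h)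
    (hsurj : Function.Surjective h) (a b : ℝ) :
    h '' Set.Icc a b = Set.Icc (h a) (h b) := by
  have e := StrictMono.orderIsoOfSurjective h hmono hsurj
  have : h = (StrictMono.orderIsoOfSurjective h hmono hsurj : ℝ → ℝ) := rfl
  rw [this, ← OrderIso.image_Icc]

/-- a quasisymmetric homeomorphism of ℝ with constant `M` induces a
doubling image measure, with doubling constant `M² + M`. -/
theorem stmt0 (h : ℝ → ℝ) (M : ℝ) (hM : 1 ≤ M)
    (hmono : StrictMono h) (hsurj : Function.Surjective h)
    (hqs : ∀ x t : ℝ, 0 < t →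
      1 / M ≤ (h (x + t) - h x) / (h x - h (x - t)) ∧
      (h (x + t) - h x) / (h x - h (x - t)) ≤ M) :
    ∀ x t : ℝ, 0 < t →
      volume (h '' Set.Icc (x - 2 * t) (x + 2 * t)) ≤
        ENNReal.ofReal (M ^ 2 + M) * volume (h '' Set.Icc (x - t) (x + t)) := by
  intro x t ht
  have hM0 : (0:ℝ) < M := lt_of_lt_of_le one_pos hM
  rw [image_Icc_of_mono h hmono hsurj, image_Icc_of_mono h hmono hsurj,
    Real.volume_Icc, Real.volume_Icc, ← ENNReal.ofReal_mul (by nlinarith)]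
  apply ENNReal.ofReal_le_ofReal
  -- key real inequality
  set a := h (x - 2 * t)
  set b := h (x - t)
  set c := h x
  set d := h (x + t)
  set e := h (x + 2 * t)
  have hba : a < b := hmono (by linarith)
  have hcb : b < c := hmono (by linarith)
  have hdc : c < d := hmono (by linarith)
  have hed : d < e := hmono (by linarith)
  -- at x
  obtain ⟨h1, h2⟩ := hqs x t ht
  -- at x + t
  obtain ⟨h3, h4⟩ := hqs (x + t) t ht
  -- at x - t
  obtain ⟨h5, h6⟩ := hqs (x - t) t ht
  have e1 : x + t + t = x + 2 * t := by ring
  have e2 : x + t - t = x := by ring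
  have e3 : x - t + t = x := by ring
  have e4 : x - t - t = x - 2 * t := by ring
  rw [e1, e2] at h3 h4
  rw [e3, e4] at h5 h6
  -- translate ratio bounds
  have k2 : d - c ≤ M * (c - b) := by
    rw [div_le_iff₀ (by linarith)] at h2; linarith
  have k4 : e - d ≤ M * (d - c) := by
    rw [div_le_iff₀ (by linarith)] at h4; linarith
  have k5 : b - a ≤ M * (c - b) := by
    rw [div_le_div_iff₀ hM0 (by linarith)] at h5
    nlinarith
  nlinarith [mul_le_mul_of_nonneg_left k2 (le_of_lt hM0)]
end

section
/- If ω is an A∞-weight on ℝ, then the increasing homeomorphism h(x) = ∫_0^x ω(t)dt (assuming ω integrates to ∞ in both directions so that h : ℝ → ℝ is a surjective increasing map) is quasisymmetric. -/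
open MeasureTheory

/-- if `ω` is an A∞-weight on ℝ and `h x = ∫_0^x ω` is an increasing
homeomorphism of ℝ onto itself, then `h` is quasisymmetric. -/
theorem stmt2 (ω : ℝ → ℝ) (hω : ∀ x, 0 ≤ ω x) (hloc : LocallyIntegrable ω volume)
    (C α : ℝ) (hC : 0 < C) (hα : 0 < α)
    (hA : ∀ a b : ℝ, a < b → ∀ E : Set ℝ, MeasurableSet E → E ⊆ Set.Icc a b →
      ∫ x in E, ω x ≤ C * ((volume E).toReal / (b - a)) ^ α * ∫ x in Set.Icc a b, ω x)
    (h : ℝ → ℝ) (hdef : ∀ x : ℝ, h x = ∫ t in (0:ℝ)..x, ω t)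
    (hmono : StrictMono h) (hsurj : Function.Surjective h) :
    ∃ M : ℝ, 1 ≤ M ∧ ∀ x t : ℝ, 0 < t →
      1 / M ≤ (h (x + t) - h x) / (h x - h (x - t)) ∧
      (h (x + t) - h x) / (h x - h (x - t)) ≤ M := by
  -- interval integrability everywhere
  have hInt : ∀ p q : ℝ, IntervalIntegrable ω volume p q := fun p q =>
    intervalIntegrable_iff.mpr
      ((hloc.integrableOn_isCompact isCompact_uIcc).mono_set Set.Ioc_subset_Icc_self)
  -- the integral over `Icc p q` equals `h q - h p`
  have hIcc : ∀ p q : ℝ, p ≤ q → ∫ x in Set.Icc p q, ω x = h q - h p := by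
    intro p q hpq
    rw [hdef, hdef, intervalIntegral.integral_interval_sub_left (hInt 0 q) (hInt 0 p),
      intervalIntegral.integral_of_le hpq, integral_Icc_eq_integral_Ioc]
  -- choose ε with C * ε^α ≤ 1/2
  set ε : ℝ := min (1/2) ((2*C)⁻¹ ^ α⁻¹) with hεdef
  have hε0 : 0 < ε := lt_min (by norm_num) (Real.rpow_pos_of_pos (by positivity) _)
  have hε2 : ε ≤ 1/2 := min_le_left _ _
  have hCε : C * ε ^ α ≤ 2⁻¹ := by
    have h1 : ε ^ α ≤ ((2*C)⁻¹ ^ α⁻¹ : ℝ) ^ α :=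
      Real.rpow_le_rpow hε0.le (min_le_right _ _) hα.le
    have h2 : (((2*C)⁻¹ : ℝ) ^ α⁻¹) ^ α = (2*C)⁻¹ :=
      Real.rpow_inv_rpow (by positivity) hα.ne'
    rw [h2] at h1
    have := mul_le_mul_of_nonneg_left h1 hC.le
    calc C * ε ^ α ≤ C * (2*C)⁻¹ := this
    _ = 2⁻¹ := by field_simp
  -- trimming an ε-fraction off the right end loses at most half the mass
  have key : ∀ p q : ℝ, p < q → h q - h (q - ε*(q-p)) ≤ 2⁻¹ * (h q - h p) := by
    intro p q hpq
    have hqp : 0 < q - p := sub_pos.mpr hpq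
    have hm : p ≤ q - ε*(q-p) := by nlinarith
    have hm2 : q - ε*(q-p) ≤ q := by nlinarith
    have hsub : Set.Icc (q - ε*(q-p)) q ⊆ Set.Icc p q := Set.Icc_subset_Icc_left hm
    have := hA p q hpq _ measurableSet_Icc hsub
    rw [hIcc _ _ hm2, hIcc _ _ hpq.le, Real.volume_Icc] at this
    have hvol : (ENNReal.ofReal (q - (q - ε*(q-p)))).toReal = ε * (q-p) := by
      rw [ENNReal.toReal_ofReal (by nlinarith)]; ring
    rw [hvol, mul_div_assoc, div_self hqp.ne', mul_one] at this
    have hhq : 0 ≤ h q - h p := sub_nonneg.mpr (hmono hpq).le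
    calc h q - h (q - ε*(q-p)) ≤ C * ε ^ α * (h q - h p) := this
    _ ≤ 2⁻¹ * (h q - h p) := mul_le_mul_of_nonneg_right hCε hhq
  -- trimming an ε-fraction off the left end loses at most half the mass
  have key' : ∀ p q : ℝ, p < q → h (p + ε*(q-p)) - h p ≤ 2⁻¹ * (h q - h p) := by
    intro p q hpq
    have hqp : 0 < q - p := sub_pos.mpr hpq
    have hm : p ≤ p + ε*(q-p) := by nlinarith
    have hm2 : p + ε*(q-p) ≤ q := by nlinarith
    have hsub : Set.Icc p (p + ε*(q-p)) ⊆ Set.Icc p q := Set.Icc_subset_Icc_right hm2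
    have := hA p q hpq _ measurableSet_Icc hsub
    rw [hIcc _ _ hm, hIcc _ _ hpq.le, Real.volume_Icc] at this
    have hvol : (ENNReal.ofReal (p + ε*(q-p) - p)).toReal = ε * (q-p) := by
      rw [ENNReal.toReal_ofReal (by nlinarith)]; ring
    rw [hvol, mul_div_assoc, div_self hqp.ne', mul_one] at this
    have hhq : 0 ≤ h q - h p := sub_nonneg.mpr (hmono hpq).le
    calc h (p + ε*(q-p)) - h p ≤ C * ε ^ α * (h q - h p) := this
    _ ≤ 2⁻¹ * (h q - h p) := mul_le_mul_of_nonneg_right hCε hhq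
  have h1ε : 0 < 1 - ε := by linarith
  -- iterated trimming from the right
  have iterR : ∀ p q : ℝ, p < q → ∀ j : ℕ,
      (2:ℝ)⁻¹ ^ j * (h q - h p) ≤ h (p + (1-ε)^j * (q-p)) - h p := by
    intro p q hpq j
    induction j with
    | zero => simp
    | succ n ih =>
      have hqp : 0 < q - p := sub_pos.mpr hpq
      set qn : ℝ := p + (1-ε)^n * (q-p) with hqn
      have hpqn : p < qn := by
        have := pow_pos h1ε n; nlinarith
      have hk := key p qn hpqn
      have heq : qn - ε * (qn - p) = p + (1-ε)^(n+1) * (q-p) := by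
        rw [hqn]; ring
      rw [heq] at hk
      have h2 : 2⁻¹ * ((2:ℝ)⁻¹ ^ n * (h q - h p)) ≤ 2⁻¹ * (h qn - h p) :=
        mul_le_mul_of_nonneg_left ih (by norm_num)
      have : (2:ℝ)⁻¹ ^ (n+1) * (h q - h p) = 2⁻¹ * ((2:ℝ)⁻¹ ^ n * (h q - h p)) := by ring
      rw [this]
      linarith
  -- iterated trimming from the left
  have iterL : ∀ p q : ℝ, p < q → ∀ j : ℕ,
      (2:ℝ)⁻¹ ^ j * (h q - h p) ≤ h q - h (q - (1-ε)^j * (q-p)) := by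
    intro p q hpq j
    induction j with
    | zero => simp
    | succ n ih =>
      have hqp : 0 < q - p := sub_pos.mpr hpq
      set qn : ℝ := q - (1-ε)^n * (q-p) with hqn
      have hpqn : qn < q := by
        have := pow_pos h1ε n; nlinarith
      have hk := key' qn q hpqn
      have heq : qn + ε * (q - qn) = q - (1-ε)^(n+1) * (q-p) := by
        rw [hqn]; ring
      rw [heq] at hk
      have h2 : 2⁻¹ * ((2:ℝ)⁻¹ ^ n * (h q - h p)) ≤ 2⁻¹ * (h q - h qn) :=
        mul_le_mul_of_nonneg_left ih (by norm_num)
      have : (2:ℝ)⁻¹ ^ (n+1) * (h q - h p) = 2⁻¹ * ((2:ℝ)⁻¹ ^ n * (h q - h p)) := by ring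
      rw [this]
      linarith
  -- choose k with (1-ε)^k ≤ 1/2
  obtain ⟨k, hk⟩ : ∃ k : ℕ, (1-ε)^k < 1/2 :=
    exists_pow_lt_of_lt_one (by norm_num) (by linarith)
  refine ⟨2^k, one_le_pow₀ (by norm_num), ?_⟩
  intro x t ht
  have hpq : x - t < x + t := by linarith
  have ha : 0 < h x - h (x - t) := sub_pos.mpr (hmono (by linarith))
  have hb : 0 < h (x + t) - h x := sub_pos.mpr (hmono (by linarith))
  have hI : 0 < h (x+t) - h (x-t) := sub_pos.mpr (hmono hpq)
  have hεk : (1-ε)^k * ((x+t) - (x-t)) ≤ t := by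
    have h0 : (0:ℝ) < 2*t := by linarith
    nlinarith [pow_pos h1ε k]
  -- right half bound: h x - h (x-t) ≥ 2⁻¹^k (h(x+t) - h(x-t))
  have hR := iterR (x-t) (x+t) hpq k
  have hmR : (x-t) + (1-ε)^k * ((x+t)-(x-t)) ≤ x := by linarith
  have hR2 : (2:ℝ)⁻¹ ^ k * (h (x+t) - h (x-t)) ≤ h x - h (x-t) := by
    have := hmono.monotone hmR
    linarith
  -- left half bound: h (x+t) - h x ≥ 2⁻¹^k (h(x+t) - h(x-t))
  have hL := iterL (x-t) (x+t) hpq k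
  have hmL : x ≤ (x+t) - (1-ε)^k * ((x+t)-(x-t)) := by linarith
  have hL2 : (2:ℝ)⁻¹ ^ k * (h (x+t) - h (x-t)) ≤ h (x+t) - h x := by
    have := hmono.monotone hmL
    linarith
  have hpow : (0:ℝ) < 2^k := by positivity
  have hinv : ((2:ℝ)^k)⁻¹ = (2:ℝ)⁻¹ ^ k := (inv_pow 2 k).symm
  constructor
  · rw [one_div, hinv, le_div_iff₀ ha]
    calc (2:ℝ)⁻¹ ^ k * (h x - h (x-t))
        ≤ (2:ℝ)⁻¹ ^ k * (h (x+t) - h (x-t)) := by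
          apply mul_le_mul_of_nonneg_left (by linarith) (by positivity)
    _ ≤ h (x+t) - h x := hL2
  · rw [div_le_iff₀ ha]
    have : (2:ℝ)⁻¹ ^ k * (h (x+t) - h x) ≤ (2:ℝ)⁻¹ ^ k * (h (x+t) - h (x-t)) := by
      apply mul_le_mul_of_nonneg_left (by linarith) (by positivity)
    have h3 : (2:ℝ)⁻¹ ^ k * (h (x+t) - h x) ≤ h x - h (x-t) := le_trans this hR2
    calc h (x+t) - h x = 2^k * ((2:ℝ)⁻¹ ^ k * (h (x+t) - h x)) := by
          rw [← mul_assoc, ← mul_pow]; norm_num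
    _ ≤ 2^k * (h x - h (x-t)) := mul_le_mul_of_nonneg_left h3 (by positivity)
end

section
/- The class of A∞-weights on ℝ is closed under composition of the associated homeomorphisms: if g and h are locally absolutely continuous increasing homeomorphisms of ℝ whose derivatives g' and h' are A∞-weights, then (g∘h)' = (g'∘h)·h' is an A∞-weight. Equivalently, the set SQS(ℝ) of strongly quasisymmetric homeomorphisms is closed under composition. -/
open MeasureTheory

/-- `ω` is an A∞-weight on ℝ. -/
def IsAinfty (ω : ℝ → ℝ) : Prop :=
  (∀ x, 0 ≤ ω x) ∧ LocallyIntegrable ω volume ∧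
  ∃ C > (0:ℝ), ∃ α > (0:ℝ), ∀ a b : ℝ, a < b →
    ∀ E : Set ℝ, MeasurableSet E → E ⊆ Set.Icc a b →
      ∫ x in E, ω x ≤ C * ((volume E).toReal / (b - a)) ^ α * ∫ x in Set.Icc a b, ω x

/-- strongly quasisymmetric homeomorphisms are closed under composition:
if `g, h` are locally absolutely continuous increasing homeomorphisms of ℝ whose
derivatives `g', h'` are A∞-weights, then `(g ∘ h)' = (g' ∘ h) · h'` is an A∞-weight. -/
theorem stmt3 (g h g' h' : ℝ → ℝ)
    (hgmono : StrictMono g) (hgsurj : Function.Surjective g)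
    (hhmono : StrictMono h) (hhsurj : Function.Surjective h)
    (hg'meas : Measurable g') (hh'meas : Measurable h')
    (hgFTC : ∀ a b : ℝ, ∫ t in a..b, g' t = g b - g a)
    (hhFTC : ∀ a b : ℝ, ∫ t in a..b, h' t = h b - h a)
    (hgA : IsAinfty g') (hhA : IsAinfty h') :
    IsAinfty (fun x => g' (h x) * h' x) := by
  obtain ⟨hg'nn, hg'loc, Cg, hCg, αg, hαg, hgIneq⟩ := hgA
  obtain ⟨hh'nn, hh'loc, Ch, hCh, αh, hαh, hhIneq⟩ := hhA
  set e : ℝ ≃o ℝ := StrictMono.orderIsoOfSurjective h hhmono hhsurj with he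
  have hce : ⇑e = h := rfl
  have hhcont : Continuous h := by rw [← hce]; exact e.continuous
  have hesymm_meas : Measurable (⇑e.symm) := e.symm.continuous.measurable
  have hre : ∀ y, h (e.symm y) = y := fun y => e.apply_symm_apply y
  have hpre : ∀ A : Set ℝ, h '' A = ⇑e.symm ⁻¹' A := by
    have hfun : Set.image h = Set.preimage ⇑e.symm :=
      Set.image_eq_preimage_of_inverse (fun x => e.symm_apply_apply x) (fun y => hre y)
    exact fun A => congrFun hfun A
  have hmeasω : Measurable (fun x => g' (h x) * h' x) :=
    (hg'meas.comp hhcont.measurable).mul hh'meas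
  have hωnn : ∀ x, 0 ≤ g' (h x) * h' x := fun x => mul_nonneg (hg'nn _) (hh'nn _)
  have himage_Icc : ∀ a b : ℝ, h '' Set.Icc a b = Set.Icc (h a) (h b) := by
    intro a b; rw [← hce]; exact e.image_Icc a b
  have hIoc_h : ∀ a b : ℝ, a ≤ b → ∫ x in Set.Ioc a b, h' x = h b - h a := by
    intro a b hab
    rw [← intervalIntegral.integral_of_le hab, hhFTC]
  have hIcc_h : ∀ a b : ℝ, a ≤ b → ∫ x in Set.Icc a b, h' x = h b - h a := by
    intro a b hab
    rw [MeasureTheory.integral_Icc_eq_integral_Ioc]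
    exact hIoc_h a b hab
  have hIntOn_h : ∀ a b : ℝ, IntegrableOn h' (Set.Icc a b) :=
    fun a b => hh'loc.integrableOn_isCompact isCompact_Icc
  -- the pushforward identity: `map e.symm volume = volume.withDensity (ofReal ∘ h')`
  have hmap : Measure.map (⇑e.symm) volume
      = volume.withDensity (fun x => ENNReal.ofReal (h' x)) := by
    have hmapIoc : ∀ a b : ℝ, a < b →
        Measure.map (⇑e.symm) volume (Set.Ioc a b) = ENNReal.ofReal (h b - h a) := by
      intro a b hab
      rw [Measure.map_apply hesymm_meas measurableSet_Ioc]
      have : ⇑e.symm ⁻¹' Set.Ioc a b = Set.Ioc (h a) (h b) := by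
        rw [e.symm.preimage_Ioc, OrderIso.symm_symm, hce]
      rw [this, Real.volume_Ioc]
    refine Measure.ext_of_Ioc' _ _ (fun a b hab => ?_) (fun a b hab => ?_)
    · rw [hmapIoc a b hab]; exact ENNReal.ofReal_ne_top
    · rw [hmapIoc a b hab, withDensity_apply _ measurableSet_Ioc,
        ← ofReal_integral_eq_lintegral_ofReal
          ((hIntOn_h a b).mono_set Set.Ioc_subset_Icc_self)
          (Filter.Eventually.of_forall fun x => hh'nn x),
        hIoc_h a b hab.le]
  have hvol_image : ∀ A : Set ℝ, MeasurableSet A →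
      volume (h '' A) = ∫⁻ x in A, ENNReal.ofReal (h' x) := by
    intro A hA
    rw [hpre A, ← Measure.map_apply hesymm_meas hA, hmap, withDensity_apply _ hA]
  have himg_meas : ∀ A : Set ℝ, MeasurableSet A → MeasurableSet (h '' A) := by
    intro A hA; rw [hpre A]; exact hesymm_meas hA
  -- the key change-of-variables identity (lintegral form)
  have hkey : ∀ A : Set ℝ, MeasurableSet A →
      ∫⁻ x in A, ENNReal.ofReal (g' (h x) * h' x)
        = ∫⁻ y in h '' A, ENNReal.ofReal (g' y) := by
    intro A hA
    have hmF : Measurable fun x => ENNReal.ofReal (g' (h x)) :=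
      ENNReal.measurable_ofReal.comp (hg'meas.comp hhcont.measurable)
    have hmd : Measurable fun x => ENNReal.ofReal (h' x) :=
      ENNReal.measurable_ofReal.comp hh'meas
    calc ∫⁻ x in A, ENNReal.ofReal (g' (h x) * h' x)
        = ∫⁻ x in A, ((fun x => ENNReal.ofReal (h' x))
            * fun x => ENNReal.ofReal (g' (h x))) x := by
          refine lintegral_congr fun x => ?_
          simp [Pi.mul_apply, ENNReal.ofReal_mul (hg'nn (h x)), mul_comm]
      _ = ∫⁻ x in A, ENNReal.ofReal (g' (h x))
            ∂(volume.withDensity fun x => ENNReal.ofReal (h' x)) :=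
          (setLIntegral_withDensity_eq_setLIntegral_mul volume hmd hmF hA).symm
      _ = ∫⁻ x in A, ENNReal.ofReal (g' (h x)) ∂(Measure.map (⇑e.symm) volume) := by
          rw [hmap]
      _ = ∫⁻ y in ⇑e.symm ⁻¹' A, ENNReal.ofReal (g' (h (e.symm y))) :=
          setLIntegral_map hA hmF hesymm_meas
      _ = ∫⁻ y in h '' A, ENNReal.ofReal (g' y) := by
          rw [hpre A]
          exact lintegral_congr fun y => by rw [hre y]
  -- Bochner-integral form
  have hintEq : ∀ A : Set ℝ, MeasurableSet A →
      ∫ x in A, g' (h x) * h' x = ∫ y in h '' A, g' y := by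
    intro A hA
    rw [integral_eq_lintegral_of_nonneg_ae (Filter.Eventually.of_forall fun x => hωnn x)
        hmeasω.aestronglyMeasurable.restrict,
      integral_eq_lintegral_of_nonneg_ae (Filter.Eventually.of_forall fun x => hg'nn x)
        hg'meas.aestronglyMeasurable.restrict,
      hkey A hA]
  -- local integrability of the composed weight
  have hloc : LocallyIntegrable (fun x => g' (h x) * h' x) volume := by
    rw [locallyIntegrable_iff]
    intro K hK
    obtain ⟨r, hr0, hr⟩ := hK.isBounded.subset_closedBall_lt 0 0
    have hKsub : K ⊆ Set.Icc (-r) r := by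
      refine hr.trans ?_
      rw [Real.closedBall_eq_Icc, zero_sub, zero_add]
    refine IntegrableOn.mono_set ?_ hKsub
    refine ⟨hmeasω.aestronglyMeasurable.restrict, ?_⟩
    rw [hasFiniteIntegral_iff_ofReal (Filter.Eventually.of_forall fun x => hωnn x)]
    calc ∫⁻ x in Set.Icc (-r) r, ENNReal.ofReal (g' (h x) * h' x)
        = ∫⁻ y in h '' Set.Icc (-r) r, ENNReal.ofReal (g' y) :=
          hkey _ measurableSet_Icc
      _ = ENNReal.ofReal (∫ y in Set.Icc (h (-r)) (h r), g' y) := by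
          rw [himage_Icc,
            ← ofReal_integral_eq_lintegral_ofReal (hg'loc.integrableOn_isCompact isCompact_Icc)
              (Filter.Eventually.of_forall fun x => hg'nn x)]
      _ < ⊤ := ENNReal.ofReal_lt_top
  refine ⟨hωnn, hloc, Cg * Ch ^ αg, by positivity, αh * αg, by positivity, ?_⟩
  intro a b hab E hE hEsub
  have hab' : h a < h b := hhmono hab
  have hba' : (0:ℝ) < h b - h a := sub_pos.mpr hab'
  have hE' : MeasurableSet (h '' E) := himg_meas E hE
  have hE'sub : h '' E ⊆ Set.Icc (h a) (h b) := by
    rw [← himage_Icc a b]; exact Set.image_mono hEsub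
  have hIntE : IntegrableOn h' E := (hIntOn_h a b).mono_set hEsub
  have hvolE' : (volume (h '' E)).toReal = ∫ x in E, h' x := by
    rw [hvol_image E hE,
      ← ofReal_integral_eq_lintegral_ofReal hIntE (Filter.Eventually.of_forall fun x => hh'nn x),
      ENNReal.toReal_ofReal (setIntegral_nonneg hE fun x _ => hh'nn x)]
  set r : ℝ := (volume E).toReal / (b - a) with hrdef
  have hrnn : 0 ≤ r := div_nonneg ENNReal.toReal_nonneg (sub_pos.mpr hab).le
  have h2 : ∫ x in E, h' x ≤ Ch * r ^ αh * (h b - h a) := by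
    have := hhIneq a b hab E hE hEsub
    rwa [hIcc_h a b hab.le] at this
  have hR : (volume (h '' E)).toReal / (h b - h a) ≤ Ch * r ^ αh := by
    rw [div_le_iff₀ hba']
    rw [hvolE']; exact h2
  have hRnn : 0 ≤ (volume (h '' E)).toReal / (h b - h a) :=
    div_nonneg ENNReal.toReal_nonneg hba'.le
  have hSnn : 0 ≤ ∫ y in Set.Icc (h a) (h b), g' y :=
    setIntegral_nonneg measurableSet_Icc fun x _ => hg'nn x
  simp only []
  rw [hintEq E hE, hintEq _ measurableSet_Icc, himage_Icc a b]
  calc ∫ y in h '' E, g' y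
      ≤ Cg * ((volume (h '' E)).toReal / (h b - h a)) ^ αg
          * ∫ y in Set.Icc (h a) (h b), g' y := hgIneq _ _ hab' _ hE' hE'sub
    _ ≤ Cg * (Ch * r ^ αh) ^ αg * ∫ y in Set.Icc (h a) (h b), g' y := by
        have := Real.rpow_le_rpow hRnn hR hαg.le
        have h3 : Cg * ((volume (h '' E)).toReal / (h b - h a)) ^ αg
            ≤ Cg * (Ch * r ^ αh) ^ αg := by
          exact mul_le_mul_of_nonneg_left this hCg.le
        exact mul_le_mul_of_nonneg_right h3 hSnn
    _ = Cg * Ch ^ αg * r ^ (αh * αg) * ∫ y in Set.Icc (h a) (h b), g' y := by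
        rw [Real.rpow_mul hrnn, Real.mul_rpow hCh.le (Real.rpow_nonneg hrnn _)]
        ring
end

section
/- If g and h are symmetric homeomorphisms of ℝ and h⁻¹ is uniformly continuous on ℝ, then g ∘ h⁻¹ is a symmetric homeomorphism of ℝ. -/
/-- `h` is a quasisymmetric homeomorphism of ℝ. -/
def Quasisymmetric (h : ℝ → ℝ) : Prop :=
  StrictMono h ∧ Function.Surjective h ∧
  ∃ M : ℝ, 1 ≤ M ∧ ∀ x t : ℝ, 0 < t →
    1 / M ≤ (h (x + t) - h x) / (h x - h (x - t)) ∧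
    (h (x + t) - h x) / (h x - h (x - t)) ≤ M

/-- `h` is a symmetric homeomorphism of ℝ: a quasisymmetric homeomorphism whose
quasisymmetry quotient tends to `1` as `t → 0⁺`, uniformly in `x`. -/
def SymmetricHomeo (h : ℝ → ℝ) : Prop :=
  Quasisymmetric h ∧
  ∀ ε > (0:ℝ), ∃ δ > (0:ℝ), ∀ x t : ℝ, 0 < t → t < δ →
    |(h (x + t) - h x) / (h x - h (x - t)) - 1| < ε

/-- Subtraction form of the quasisymmetry inequalities. -/
def QSsub (q : ℝ → ℝ) (M : ℝ) : Prop :=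
  ∀ x t : ℝ, 0 < t →
    q (x + t) - q x ≤ M * (q x - q (x - t)) ∧
    q x - q (x - t) ≤ M * (q (x + t) - q x)

lemma qs_to_sub {q : ℝ → ℝ} {M : ℝ} (mono : StrictMono q) (hM : 1 ≤ M)
    (hqs : ∀ x t : ℝ, 0 < t →
      1 / M ≤ (q (x + t) - q x) / (q x - q (x - t)) ∧
      (q (x + t) - q x) / (q x - q (x - t)) ≤ M) : QSsub q M := by
  intro x t ht
  have hM0 : (0:ℝ) < M := by linarith
  have hd : 0 < q x - q (x - t) := sub_pos.mpr (mono (by linarith))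
  obtain ⟨h1, h2⟩ := hqs x t ht
  constructor
  · rw [div_le_iff₀ hd] at h2; linarith
  · rw [div_le_div_iff₀ hM0 hd] at h1; linarith

lemma iter_half_up {q : ℝ → ℝ} {M : ℝ} (hM : 1 ≤ M) (hq : QSsub q M) :
    ∀ n : ℕ, ∀ p L : ℝ, 0 < L →
      q (p + L / 2 ^ n) - q p ≤ (M / (1 + M)) ^ n * (q (p + L) - q p) := by
  intro n
  induction n with
  | zero => intro p L hL; norm_num
  | succ n ih =>
    intro p L hL
    have h2 : (0:ℝ) < L / 2 := by linarith
    have hM0 : (0:ℝ) < 1 + M := by linarith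
    have half : q (p + L / 2) - q p ≤ M / (1 + M) * (q (p + L) - q p) := by
      obtain ⟨hA, hB⟩ := hq (p + L / 2) (L / 2) h2
      rw [show p + L / 2 + L / 2 = p + L from by ring,
        show p + L / 2 - L / 2 = p from by ring] at hA hB
      rw [div_mul_eq_mul_div, le_div_iff₀ hM0]
      nlinarith
    have hc : (0:ℝ) ≤ M / (1 + M) := by positivity
    calc q (p + L / 2 ^ (n + 1)) - q p
        = q (p + (L / 2) / 2 ^ n) - q p := by ring_nf
      _ ≤ (M / (1 + M)) ^ n * (q (p + L / 2) - q p) := ih p (L / 2) h2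
      _ ≤ (M / (1 + M)) ^ n * (M / (1 + M) * (q (p + L) - q p)) :=
          mul_le_mul_of_nonneg_left half (pow_nonneg hc n)
      _ = (M / (1 + M)) ^ (n + 1) * (q (p + L) - q p) := by ring

lemma iter_half_down {q : ℝ → ℝ} {M : ℝ} (hM : 1 ≤ M) (hq : QSsub q M) :
    ∀ n : ℕ, ∀ p L : ℝ, 0 < L →
      (1 / (1 + M)) ^ n * (q (p + L) - q p) ≤ q (p + L / 2 ^ n) - q p := by
  intro n
  induction n with
  | zero => intro p L hL; norm_num
  | succ n ih =>
    intro p L hL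
    have h2 : (0:ℝ) < L / 2 := by linarith
    have hM0 : (0:ℝ) < 1 + M := by linarith
    have half : 1 / (1 + M) * (q (p + L) - q p) ≤ q (p + L / 2) - q p := by
      obtain ⟨hA, hB⟩ := hq (p + L / 2) (L / 2) h2
      rw [show p + L / 2 + L / 2 = p + L from by ring,
        show p + L / 2 - L / 2 = p from by ring] at hA hB
      rw [div_mul_eq_mul_div, div_le_iff₀ hM0]
      nlinarith
    have hc : (0:ℝ) ≤ 1 / (1 + M) := by positivity
    calc (1 / (1 + M)) ^ (n + 1) * (q (p + L) - q p)
        = (1 / (1 + M)) ^ n * (1 / (1 + M) * (q (p + L) - q p)) := by ring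
      _ ≤ (1 / (1 + M)) ^ n * (q (p + L / 2) - q p) :=
          mul_le_mul_of_nonneg_left half (pow_nonneg hc n)
      _ ≤ q (p + (L / 2) / 2 ^ n) - q p := ih p (L / 2) h2
      _ = q (p + L / 2 ^ (n + 1)) - q p := by ring_nf

lemma iter_double_up {q : ℝ → ℝ} {M : ℝ} (hM : 1 ≤ M) (hq : QSsub q M) :
    ∀ k : ℕ, ∀ p L : ℝ, 0 < L →
      q p - q (p - 2 ^ k * L) ≤ (1 + M) ^ k * (q p - q (p - L)) := by
  intro k
  induction k with
  | zero => intro p L hL; norm_num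
  | succ k ih =>
    intro p L hL
    have h2 : (0:ℝ) < 2 * L := by linarith
    have dbl : q p - q (p - 2 * L) ≤ (1 + M) * (q p - q (p - L)) := by
      obtain ⟨hA, hB⟩ := hq (p - L) L hL
      rw [show p - L + L = p from by ring, show p - L - L = p - 2 * L from by ring] at hA hB
      linarith
    have hc : (0:ℝ) ≤ (1 + M) ^ k := by positivity
    calc q p - q (p - 2 ^ (k + 1) * L)
        = q p - q (p - 2 ^ k * (2 * L)) := by ring_nf
      _ ≤ (1 + M) ^ k * (q p - q (p - 2 * L)) := ih p (2 * L) h2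
      _ ≤ (1 + M) ^ k * ((1 + M) * (q p - q (p - L))) :=
          mul_le_mul_of_nonneg_left dbl hc
      _ = (1 + M) ^ (k + 1) * (q p - q (p - L)) := by ring

lemma iter_double_down {q : ℝ → ℝ} {M : ℝ} (hM : 1 ≤ M) (hq : QSsub q M) :
    ∀ k : ℕ, ∀ p L : ℝ, 0 < L →
      (1 + 1 / M) ^ k * (q p - q (p - L)) ≤ q p - q (p - 2 ^ k * L) := by
  intro k
  induction k with
  | zero => intro p L hL; norm_num
  | succ k ih =>
    intro p L hL
    have hM0 : (0:ℝ) < M := by linarith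
    have h2 : (0:ℝ) < 2 * L := by linarith
    have dbl : (1 + 1 / M) * (q p - q (p - L)) ≤ q p - q (p - 2 * L) := by
      obtain ⟨hA, hB⟩ := hq (p - L) L hL
      rw [show p - L + L = p from by ring, show p - L - L = p - 2 * L from by ring] at hA hB
      have h' : 1 / M * (q p - q (p - L)) ≤ q (p - L) - q (p - 2 * L) := by
        rw [div_mul_eq_mul_div, div_le_iff₀ hM0]; nlinarith
      nlinarith
    have hc : (0:ℝ) ≤ (1 + 1 / M) ^ k := by positivity
    calc (1 + 1 / M) ^ (k + 1) * (q p - q (p - L))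
        = (1 + 1 / M) ^ k * ((1 + 1 / M) * (q p - q (p - L))) := by ring
      _ ≤ (1 + 1 / M) ^ k * (q p - q (p - 2 * L)) :=
          mul_le_mul_of_nonneg_left dbl hc
      _ ≤ q p - q (p - 2 ^ k * (2 * L)) := ih p (2 * L) h2
      _ = q p - q (p - 2 ^ (k + 1) * L) := by ring_nf

set_option maxHeartbeats 3200000 in
/-- if `g, h` are symmetric homeomorphisms of ℝ and `h⁻¹` is uniformly
continuous on ℝ, then `g ∘ h⁻¹` is a symmetric homeomorphism of ℝ. -/
theorem stmt10 (g h hinv : ℝ → ℝ)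
    (hg : SymmetricHomeo g) (hh : SymmetricHomeo h)
    (hli : Function.LeftInverse hinv h) (hri : Function.RightInverse hinv h)
    (huc : UniformContinuous hinv) :
    SymmetricHomeo (g ∘ hinv) := by
  obtain ⟨⟨gmono, gsurj, Mg, hMg1, hMgqs⟩, gsym⟩ := hg
  obtain ⟨⟨hmono, hsurj, Mh, hMh1, hMhqs⟩, hsym⟩ := hh
  have gsub : QSsub g Mg := qs_to_sub gmono hMg1 hMgqs
  have hsub : QSsub h Mh := qs_to_sub hmono hMh1 hMhqs
  have hMg0 : (0:ℝ) < Mg := by linarith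
  have hMh0 : (0:ℝ) < Mh := by linarith
  have invmono : StrictMono hinv := by
    intro u v huv
    have hlt : h (hinv u) < h (hinv v) := by rw [hri u, hri v]; exact huv
    exact hmono.lt_iff_lt.mp hlt
  have honeMh : (1:ℝ) < 1 + 1 / Mh := by
    have h0 : (0:ℝ) < 1 / Mh := by positivity
    linarith
  obtain ⟨k, hk⟩ := pow_unbounded_of_one_lt Mh honeMh
  have hPk1 : (1:ℝ) ≤ (1 + Mg) ^ k := one_le_pow₀ (by linarith)
  have hPk0 : (0:ℝ) ≤ (1 + Mg) ^ k := by positivity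
  refine ⟨⟨gmono.comp invmono, ?_, Mg * (1 + Mg) ^ k, ?_, ?_⟩, ?_⟩
  · intro z
    obtain ⟨w, hw⟩ := gsurj z
    exact ⟨h w, by simp [Function.comp_apply, hli w, hw]⟩
  · nlinarith
  · intro x t ht
    simp only [Function.comp_apply]
    set y := hinv x with hy
    set s := hinv (x + t) - y with hs
    set s' := y - hinv (x - t) with hs'
    rw [show hinv (x + t) = y + s from by rw [hs]; ring,
      show hinv (x - t) = y - s' from by rw [hs']; ring]
    have hspos : 0 < s := sub_pos.mpr (invmono (show x < x + t by linarith))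
    have hs'pos : 0 < s' := sub_pos.mpr (invmono (show x - t < x by linarith))
    have hhy : h y = x := by rw [hy]; exact hri x
    have hh1 : h (y + s) = x + t := by
      rw [show y + s = hinv (x + t) from by rw [hs]; ring]; exact hri _
    have hh2 : h (y - s') = x - t := by
      rw [show y - s' = hinv (x - t) from by rw [hs']; ring]; exact hri _
    have e1 : h y - h (y - s') = t := by rw [hhy, hh2]; ring
    have e2 : h (y + s) - h y = t := by rw [hh1, hhy]; ring
    have hds : 0 < h y - h (y - s) := sub_pos.mpr (hmono (by linarith))
    have Npos : 0 < g (y + s) - g y := sub_pos.mpr (gmono (by linarith))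
    have Gspos : 0 < g y - g (y - s) := sub_pos.mpr (gmono (by linarith))
    have Dpos : 0 < g y - g (y - s') := sub_pos.mpr (gmono (by linarith))
    have hcmp1 : s' ≤ 2 ^ k * s := by
      by_contra hcon
      push_neg at hcon
      have h1 : h (y - s') < h (y - 2 ^ k * s) := hmono (by linarith)
      have h2 := iter_double_down hMh1 hsub k y s hspos
      have h3 := (hsub y s hspos).1
      nlinarith [mul_lt_mul_of_pos_right hk hds]
    have hcmp2 : s ≤ 2 ^ k * s' := by
      by_contra hcon
      push_neg at hcon
      have h1 : h (y - s) < h (y - 2 ^ k * s') := hmono (by linarith)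
      have h2 := iter_double_down hMh1 hsub k y s' hs'pos
      have h3 := (hsub y s hspos).2
      nlinarith [mul_lt_mul_of_pos_right hk ht]
    have gkey1 : g y - g (y - s') ≤ (1 + Mg) ^ k * (g y - g (y - s)) := by
      have h1 : g (y - 2 ^ k * s) ≤ g (y - s') := gmono.monotone (by linarith)
      have h2 := iter_double_up hMg1 gsub k y s hspos
      linarith
    have gkey2 : g y - g (y - s) ≤ (1 + Mg) ^ k * (g y - g (y - s')) := by
      have h1 : g (y - 2 ^ k * s') ≤ g (y - s) := gmono.monotone (by linarith)
      have h2 := iter_double_up hMg1 gsub k y s' hs'pos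
      linarith
    obtain ⟨gN1, gN2⟩ := gsub y s hspos
    constructor
    · rw [div_le_div_iff₀ (by positivity) Dpos]
      linarith only [gkey1, mul_le_mul_of_nonneg_left gN2 hPk0]
    · rw [div_le_iff₀ Dpos]
      linarith only [gN1, mul_le_mul_of_nonneg_left gkey2 hMg0.le]
  · intro ε hε
    obtain ⟨ε₂, hε₂pos, hε₂ε, hε₂1⟩ : ∃ e : ℝ, 0 < e ∧ 4 * e ≤ ε ∧ 4 * e ≤ 1 := by
      refine ⟨min ε 1 / 4, by positivity, ?_, ?_⟩
      · have := min_le_left ε 1; linarith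
      · have := min_le_right ε 1; linarith
    have hr1 : Mg / (1 + Mg) < 1 := (div_lt_one (by linarith)).mpr (by linarith)
    obtain ⟨n, hn⟩ := exists_pow_lt_of_lt_one hε₂pos hr1
    have hKpos : (0:ℝ) < (1 / (1 + Mh)) ^ n := by positivity
    have hε₃pos : (0:ℝ) < (1 / (1 + Mh)) ^ n / 8 := by positivity
    obtain ⟨δg, hδg, Hg⟩ := gsym ε₂ hε₂pos
    obtain ⟨δh, hδh, Hh⟩ := hsym ((1 / (1 + Mh)) ^ n / 8) hε₃pos
    obtain ⟨δ, hδ0, Hδ⟩ := Metric.uniformContinuous_iff.mp huc (min δg δh) (lt_min hδg hδh)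
    refine ⟨δ, hδ0, ?_⟩
    intro x t ht htδ
    simp only [Function.comp_apply]
    set y := hinv x with hy
    set s := hinv (x + t) - y with hs
    set s' := y - hinv (x - t) with hs'
    rw [show hinv (x + t) = y + s from by rw [hs]; ring,
      show hinv (x - t) = y - s' from by rw [hs']; ring]
    have hspos : 0 < s := sub_pos.mpr (invmono (show x < x + t by linarith))
    have hs'pos : 0 < s' := sub_pos.mpr (invmono (show x - t < x by linarith))
    have hhy : h y = x := by rw [hy]; exact hri x
    have hh1 : h (y + s) = x + t := by
      rw [show y + s = hinv (x + t) from by rw [hs]; ring]; exact hri _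
    have hh2 : h (y - s') = x - t := by
      rw [show y - s' = hinv (x - t) from by rw [hs']; ring]; exact hri _
    have e2 : h (y + s) - h y = t := by rw [hh1, hhy]; ring
    have hsδ : s < min δg δh := by
      have hd : dist (x + t) x < δ := by
        rw [Real.dist_eq, show x + t - x = t from by ring, abs_of_pos ht]; exact htδ
      have h2 := Hδ hd
      rw [Real.dist_eq, ← hy] at h2
      calc s = hinv (x + t) - y := hs
        _ ≤ |hinv (x + t) - y| := le_abs_self _
        _ < _ := h2
    have hsδg : s < δg := lt_of_lt_of_le hsδ (min_le_left _ _)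
    have hsδh : s < δh := lt_of_lt_of_le hsδ (min_le_right _ _)
    have hdpos : 0 < h y - h (y - s) := sub_pos.mpr (hmono (by linarith))
    have Hh' := Hh y s hspos hsδh
    rw [e2, abs_lt] at Hh'
    have hdu : t < (1 + (1 / (1 + Mh)) ^ n / 8) * (h y - h (y - s)) := by
      have h6 : t / (h y - h (y - s)) < 1 + (1 / (1 + Mh)) ^ n / 8 := by linarith [Hh'.2]
      exact (div_lt_iff₀ hdpos).mp h6
    have hdl : (1 - (1 / (1 + Mh)) ^ n / 8) * (h y - h (y - s)) < t := by
      have h6 : 1 - (1 / (1 + Mh)) ^ n / 8 < t / (h y - h (y - s)) := by linarith [Hh'.1]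
      exact (lt_div_iff₀ hdpos).mp h6
    have hK1 : (1:ℝ) / (1 + Mh) ≤ 1 := by
      rw [div_le_one (by linarith)]; linarith
    have hKle1 : ((1:ℝ) / (1 + Mh)) ^ n ≤ 1 := pow_le_one₀ (by positivity) hK1
    have hd2t : h y - h (y - s) < 2 * t := by
      have h7 := mul_le_mul_of_nonneg_right hKle1 hdpos.le
      linarith only [hdl, h7, ht, hdpos]
    have habs : |h y - h (y - s) - t| < (1 / (1 + Mh)) ^ n * t / 4 := by
      have h8 := mul_lt_mul_of_pos_left hd2t hKpos
      rw [abs_lt]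
      constructor
      · linarith only [hdu, h8]
      · linarith only [hdl, h8]
    obtain ⟨a, b, hb0, hba, hbs, hsa, hbs', hs'a, hha, hhb⟩ :
        ∃ a b : ℝ, 0 < b ∧ b ≤ a ∧ b ≤ s ∧ s ≤ a ∧ b ≤ s' ∧ s' ≤ a ∧
          t ≤ h y - h (y - a) ∧
          h (y - b) - h (y - a) = |h y - h (y - s) - t| := by
      have e1' : h y - h (y - s') = t := by rw [hhy, hh2]; ring
      rcases le_total s s' with hss | hss
      · have hmm : h (y - s') ≤ h (y - s) := hmono.monotone (by linarith)
        refine ⟨s', s, hspos, hss, le_refl s, hss, hss, le_refl s', by linarith, ?_⟩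
        rw [abs_of_nonpos (by linarith)]
        linarith
      · have hmm : h (y - s) ≤ h (y - s') := hmono.monotone (by linarith)
        refine ⟨s, s', hs'pos, hss, hss, le_refl s, le_refl s', hss, by linarith, ?_⟩
        rw [abs_of_nonneg (by linarith)]
        linarith
    have hapos : 0 < a := lt_of_lt_of_le hb0 hba
    have key : a - b ≤ a / 2 ^ n := by
      by_contra hcon
      push_neg at hcon
      have h1 := iter_half_down hMh1 hsub n (y - a) a hapos
      rw [show y - a + a = y from by ring] at h1
      have h2 : h (y - a + a / 2 ^ n) ≤ h (y - b) := hmono.monotone (by linarith)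
      have h3 := mul_le_mul_of_nonneg_left hha hKpos.le
      have h4 := mul_pos hKpos ht
      linarith only [h1, h2, h3, h4, habs, hhb]
    have Gapos : 0 < g y - g (y - a) := sub_pos.mpr (gmono (by linarith))
    have Gspos : 0 < g y - g (y - s) := sub_pos.mpr (gmono (by linarith))
    have Npos : 0 < g (y + s) - g y := sub_pos.mpr (gmono (by linarith))
    have Dpos : 0 < g y - g (y - s') := sub_pos.mpr (gmono (by linarith))
    have g1 := iter_half_up hMg1 gsub n (y - a) a hapos
    rw [show y - a + a = y from by ring] at g1
    have g2 : g (y - b) ≤ g (y - a + a / 2 ^ n) := gmono.monotone (by linarith)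
    have g3 : g (y - b) - g (y - a) ≤ ε₂ * (g y - g (y - a)) := by
      have h5 := mul_le_mul_of_nonneg_right hn.le Gapos.le
      linarith only [g1, g2, h5]
    have hGb : (1 - ε₂) * (g y - g (y - a)) ≤ g y - g (y - b) := by
      linarith only [g3]
    have hDl : g y - g (y - b) ≤ g y - g (y - s') := by
      have := gmono.monotone (show y - s' ≤ y - b by linarith); linarith
    have hDu : g y - g (y - s') ≤ g y - g (y - a) := by
      have := gmono.monotone (show y - a ≤ y - s' by linarith); linarith
    have hSl : g y - g (y - b) ≤ g y - g (y - s) := by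
      have := gmono.monotone (show y - s ≤ y - b by linarith); linarith
    have hSu : g y - g (y - s) ≤ g y - g (y - a) := by
      have := gmono.monotone (show y - a ≤ y - s by linarith); linarith
    have Hg' := Hg y s hspos hsδg
    rw [abs_lt] at Hg'
    have gNu : g (y + s) - g y < (1 + ε₂) * (g y - g (y - s)) := by
      have h6 : (g (y + s) - g y) / (g y - g (y - s)) < 1 + ε₂ := by linarith [Hg'.2]
      exact (div_lt_iff₀ Gspos).mp h6
    have gNl : (1 - ε₂) * (g y - g (y - s)) < g (y + s) - g y := by
      have h6 : 1 - ε₂ < (g (y + s) - g y) / (g y - g (y - s)) := by linarith [Hg'.1]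
      exact (lt_div_iff₀ Gspos).mp h6
    rw [abs_lt]
    constructor
    · have hstep : (1 - ε) * (g y - g (y - s')) < g (y + s) - g y := by
        rcases le_or_gt ε 1 with hε1 | hε1
        · have j1 := mul_le_mul_of_nonneg_left hGb (show (0:ℝ) ≤ 1 - ε₂ by linarith)
          have j2 := mul_le_mul_of_nonneg_left hSl (show (0:ℝ) ≤ 1 - ε₂ by linarith)
          have j3 := mul_le_mul_of_nonneg_right
            (show 1 - ε ≤ (1 - ε₂) * (1 - ε₂) by
              linarith only [sq_nonneg ε₂, hε₂ε, hε₂pos, hε]) Gapos.le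
          have j4 := mul_le_mul_of_nonneg_left hDu (show (0:ℝ) ≤ 1 - ε by linarith)
          linarith only [gNl, j1, j2, j3, j4]
        · have j5 : 0 ≤ (ε - 1) * (g y - g (y - s')) :=
            mul_nonneg (by linarith) Dpos.le
          linarith only [j5, Npos]
      have h9 := (lt_div_iff₀ Dpos).mpr hstep
      linarith
    · have hstep : g (y + s) - g y < (1 + ε) * (g y - g (y - s')) := by
        have i1 := mul_le_mul_of_nonneg_left hSu (show (0:ℝ) ≤ 1 + ε₂ by linarith)
        have i2 : (1 + ε₂) * (g y - g (y - a)) ≤ (1 + ε) * (1 - ε₂) * (g y - g (y - a)) := by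
          apply mul_le_mul_of_nonneg_right _ Gapos.le
          linarith only [mul_nonneg hε.le (show (0:ℝ) ≤ 1 - 4 * ε₂ by linarith only [hε₂1]),
            hε₂ε, hε₂pos]
        have i3 := mul_le_mul_of_nonneg_left hGb (show (0:ℝ) ≤ 1 + ε by linarith)
        have i4 := mul_le_mul_of_nonneg_left hDl (show (0:ℝ) ≤ 1 + ε by linarith)
        linarith only [gNu, i1, i2, i3, i4]
      have h9 := (div_lt_iff₀ Dpos).mpr hstep
      linarith
end

section
/- If h is a symmetric homeomorphism of ℝ and h⁻¹ is uniformly continuous on ℝ, then h⁻¹ is symmetric; consequently, the set of symmetric homeomorphisms h with both h and h⁻¹ uniformly continuous is a subgroup of the quasisymmetric group. -/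
/-- `h` is a symmetric homeomorphism with both `h` and `h⁻¹` uniformly continuous. -/
def Suc (h : ℝ → ℝ) : Prop :=
  SymmetricHomeo h ∧ UniformContinuous h ∧
  ∃ k : ℝ → ℝ, Function.LeftInverse k h ∧ Function.RightInverse k h ∧ UniformContinuous k

open Function


section helpers
variable {h : ℝ → ℝ}

lemma incr_pos (hm : StrictMono h) {a b : ℝ} (hab : a < b) : 0 < h b - h a :=
  sub_pos.2 (hm hab)

/-- symmetry hypothesis in multiplicative form -/
lemma sym_mul (hm : StrictMono h) {ε δ : ℝ}
    (H : ∀ x t : ℝ, 0 < t → t < δ → |(h (x + t) - h x) / (h x - h (x - t)) - 1| < ε)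
    (x : ℝ) {t : ℝ} (ht : 0 < t) (htδ : t < δ) :
    (1 - ε) * (h x - h (x - t)) < h (x + t) - h x ∧
      h (x + t) - h x < (1 + ε) * (h x - h (x - t)) := by
  have d : 0 < h x - h (x - t) := incr_pos hm (by linarith)
  have habs := abs_lt.1 (H x t ht htδ)
  have h1 : 1 - ε < (h (x + t) - h x) / (h x - h (x - t)) := by linarith [habs.1]
  have h2 : (h (x + t) - h x) / (h x - h (x - t)) < 1 + ε := by linarith [habs.2]
  constructor
  · have := mul_lt_mul_of_pos_right h1 d
    rwa [div_mul_cancel₀ _ (ne_of_gt d)] at this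
  · have := mul_lt_mul_of_pos_right h2 d
    rwa [div_mul_cancel₀ _ (ne_of_gt d)] at this

/-- quasisymmetry upper bound in multiplicative form -/
lemma qs_up (hm : StrictMono h) {M : ℝ} (hM : 1 ≤ M)
    (H : ∀ x t : ℝ, 0 < t →
      1 / M ≤ (h (x + t) - h x) / (h x - h (x - t)) ∧
      (h (x + t) - h x) / (h x - h (x - t)) ≤ M)
    {x t : ℝ} (ht : 0 < t) :
    h (x + t) - h x ≤ M * (h x - h (x - t)) := by
  have d : 0 < h x - h (x - t) := incr_pos hm (by linarith)
  have h2 := (H x t ht).2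
  have := mul_le_mul_of_nonneg_right h2 (le_of_lt d)
  rwa [div_mul_cancel₀ _ (ne_of_gt d)] at this

/-- quasisymmetry lower bound in multiplicative form -/
lemma qs_down (hm : StrictMono h) {M : ℝ} (hM : 1 ≤ M)
    (H : ∀ x t : ℝ, 0 < t →
      1 / M ≤ (h (x + t) - h x) / (h x - h (x - t)) ∧
      (h (x + t) - h x) / (h x - h (x - t)) ≤ M)
    {x t : ℝ} (ht : 0 < t) :
    h x - h (x - t) ≤ M * (h (x + t) - h x) := by
  have d : 0 < h x - h (x - t) := incr_pos hm (by linarith)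
  have hMp : 0 < M := by linarith
  have h1 := (H x t ht).1
  rw [div_le_div_iff₀ hMp d] at h1
  linarith

/-- doubling upper bound, right version -/
lemma doub_up_right (hm : StrictMono h) {M : ℝ} (hM : 1 ≤ M)
    (H : ∀ x t : ℝ, 0 < t →
      1 / M ≤ (h (x + t) - h x) / (h x - h (x - t)) ∧
      (h (x + t) - h x) / (h x - h (x - t)) ≤ M)
    (n : ℕ) {x t : ℝ} (ht : 0 < t) :
    h (x + 2 ^ n * t) - h x ≤ (1 + M) ^ n * (h (x + t) - h x) := by
  induction n generalizing t with
  | zero => simp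
  | succ n ih =>
    have h2t : (0:ℝ) < 2 * t := by linarith
    have step : h (x + 2 * t) - h x ≤ (1 + M) * (h (x + t) - h x) := by
      have := qs_up hm hM H (x := x + t) (t := t) ht
      have e1 : x + t + t = x + 2 * t := by ring
      have e2 : x + t - t = x := by ring
      rw [e1, e2] at this
      linarith
    have ihc := ih h2t
    have e3 : x + 2 ^ n * (2 * t) = x + 2 ^ (n + 1) * t := by ring
    rw [e3] at ihc
    have hstep' : (1 + M) ^ n * (h (x + 2 * t) - h x) ≤ (1 + M) ^ n * ((1 + M) * (h (x + t) - h x)) :=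
      mul_le_mul_of_nonneg_left step (by positivity)
    calc h (x + 2 ^ (n+1) * t) - h x ≤ (1 + M) ^ n * (h (x + 2 * t) - h x) := ihc
      _ ≤ (1 + M) ^ n * ((1 + M) * (h (x + t) - h x)) := hstep'
      _ = (1 + M) ^ (n+1) * (h (x + t) - h x) := by ring

/-- doubling upper bound, left version -/
lemma doub_up_left (hm : StrictMono h) {M : ℝ} (hM : 1 ≤ M)
    (H : ∀ x t : ℝ, 0 < t →
      1 / M ≤ (h (x + t) - h x) / (h x - h (x - t)) ∧
      (h (x + t) - h x) / (h x - h (x - t)) ≤ M)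
    (n : ℕ) {x t : ℝ} (ht : 0 < t) :
    h x - h (x - 2 ^ n * t) ≤ (1 + M) ^ n * (h x - h (x - t)) := by
  induction n generalizing t with
  | zero => simp
  | succ n ih =>
    have h2t : (0:ℝ) < 2 * t := by linarith
    have step : h x - h (x - 2 * t) ≤ (1 + M) * (h x - h (x - t)) := by
      have := qs_down hm hM H (x := x - t) (t := t) ht
      have e1 : x - t + t = x := by ring
      have e2 : x - t - t = x - 2 * t := by ring
      rw [e1, e2] at this
      linarith
    have ihc := ih h2t
    have e3 : x - 2 ^ n * (2 * t) = x - 2 ^ (n + 1) * t := by ring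
    rw [e3] at ihc
    have hstep' : (1 + M) ^ n * (h x - h (x - 2 * t)) ≤ (1 + M) ^ n * ((1 + M) * (h x - h (x - t))) :=
      mul_le_mul_of_nonneg_left step (by positivity)
    calc h x - h (x - 2 ^ (n+1) * t) ≤ (1 + M) ^ n * (h x - h (x - 2*t)) := ihc
      _ ≤ (1 + M) ^ n * ((1 + M) * (h x - h (x - t))) := hstep'
      _ = (1 + M) ^ (n+1) * (h x - h (x - t)) := by ring

/-- growth lower bound, right version -/
lemma doub_down_right (hm : StrictMono h) {M : ℝ} (hM : 1 ≤ M)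
    (H : ∀ x t : ℝ, 0 < t →
      1 / M ≤ (h (x + t) - h x) / (h x - h (x - t)) ∧
      (h (x + t) - h x) / (h x - h (x - t)) ≤ M)
    (n : ℕ) {x t : ℝ} (ht : 0 < t) :
    (1 + 1 / M) ^ n * (h (x + t) - h x) ≤ h (x + 2 ^ n * t) - h x := by
  have hMp : 0 < M := by linarith
  induction n generalizing t with
  | zero => simp
  | succ n ih =>
    have h2t : (0:ℝ) < 2 * t := by linarith
    have step : (1 + 1 / M) * (h (x + t) - h x) ≤ h (x + 2 * t) - h x := by
      have := qs_down hm hM H (x := x + t) (t := t) ht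
      have e1 : x + t + t = x + 2 * t := by ring
      have e2 : x + t - t = x := by ring
      rw [e1, e2] at this
      have hd : 0 < h (x + t) - h x := incr_pos hm (by linarith)
      -- qs_down at (x+t,t) : h (x+t) - h x ≤ M * (h (x+2t) - h (x+t))
      have : (h (x + t) - h x) / M ≤ h (x + 2*t) - h (x+t) := by
        rw [div_le_iff₀ hMp]; linarith
      have expand : 1 / M * (h (x+t) - h x) ≤ h (x + 2*t) - h (x+t) := by
        rw [div_mul_eq_mul_div, mul_comm]
        rw [div_le_iff₀ hMp] at this ⊢
        linarith
      linarith
    have ihc := ih h2t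
    have e3 : x + 2 ^ n * (2 * t) = x + 2 ^ (n + 1) * t := by ring
    rw [e3] at ihc
    have hstep' : (1 + 1/M) ^ n * ((1 + 1/M) * (h (x + t) - h x)) ≤ (1 + 1/M) ^ n * (h (x + 2*t) - h x) :=
      mul_le_mul_of_nonneg_left step (by positivity)
    calc (1 + 1/M) ^ (n+1) * (h (x + t) - h x) = (1 + 1/M) ^ n * ((1 + 1/M) * (h (x + t) - h x)) := by ring
      _ ≤ (1 + 1/M) ^ n * (h (x + 2*t) - h x) := hstep'
      _ ≤ h (x + 2 ^ (n+1) * t) - h x := ihc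

/-- growth lower bound, left version -/
lemma doub_down_left (hm : StrictMono h) {M : ℝ} (hM : 1 ≤ M)
    (H : ∀ x t : ℝ, 0 < t →
      1 / M ≤ (h (x + t) - h x) / (h x - h (x - t)) ∧
      (h (x + t) - h x) / (h x - h (x - t)) ≤ M)
    (n : ℕ) {x t : ℝ} (ht : 0 < t) :
    (1 + 1 / M) ^ n * (h x - h (x - t)) ≤ h x - h (x - 2 ^ n * t) := by
  have hMp : 0 < M := by linarith
  induction n generalizing t with
  | zero => simp
  | succ n ih =>
    have h2t : (0:ℝ) < 2 * t := by linarith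
    have step : (1 + 1 / M) * (h x - h (x - t)) ≤ h x - h (x - 2 * t) := by
      have := qs_up hm hM H (x := x - t) (t := t) ht
      have e1 : x - t + t = x := by ring
      have e2 : x - t - t = x - 2 * t := by ring
      rw [e1, e2] at this
      -- this : h x - h (x - t) ≤ M * (h (x - t) - h (x - 2t))
      have expand : 1 / M * (h x - h (x - t)) ≤ h (x - t) - h (x - 2*t) := by
        rw [div_mul_eq_mul_div, div_le_iff₀ hMp]
        linarith
      linarith
    have ihc := ih h2t
    have e3 : x - 2 ^ n * (2 * t) = x - 2 ^ (n + 1) * t := by ring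
    rw [e3] at ihc
    have hstep' : (1 + 1/M) ^ n * ((1 + 1/M) * (h x - h (x - t))) ≤ (1 + 1/M) ^ n * (h x - h (x - 2*t)) :=
      mul_le_mul_of_nonneg_left step (by positivity)
    calc (1 + 1/M) ^ (n+1) * (h x - h (x - t)) = (1 + 1/M) ^ n * ((1 + 1/M) * (h x - h (x - t))) := by ring
      _ ≤ (1 + 1/M) ^ n * (h x - h (x - 2*t)) := hstep'
      _ ≤ h x - h (x - 2 ^ (n+1) * t) := ihc

lemma incr_pos' (hm : StrictMono h) {a b : ℝ} (hab : a < b) : 0 < h b - h a :=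
  sub_pos.2 (hm hab)

/-- `H` is the `ε = 1/2` symmetry estimate in multiplicative form. -/
def HalfSym (h : ℝ → ℝ) (δ : ℝ) : Prop :=
  ∀ x t : ℝ, 0 < t → t < δ →
    (1/2) * (h x - h (x - t)) < h (x + t) - h x ∧
    h (x + t) - h x < (3/2) * (h x - h (x - t))

lemma half_lt {u δ : ℝ} (hu : 0 < u) (huδ : u < δ) (n : ℕ) : u / 2 ^ (n+1) < δ := by
  have h2 : (2:ℝ) ≤ 2 ^ (n+1) := by
    calc (2:ℝ) = 2^1 := by norm_num
    _ ≤ 2^(n+1) := by apply pow_le_pow_right₀ (by norm_num); omega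
  have : u / 2 ^ (n+1) ≤ u / 2 := by
    apply div_le_div_of_nonneg_left (le_of_lt hu) (by norm_num) h2
  linarith

/-- bounds on the rightmost dyadic piece of `[b, b+u]` -/
lemma right_piece (hm : StrictMono h) {δ : ℝ}
    (H : HalfSym h δ) (b : ℝ) {u : ℝ} (hu : 0 < u) (huδ : u < δ) (n : ℕ) :
    (1/3)^n * (h (b + u) - h b) ≤ h (b + u) - h (b + u - u / 2 ^ n) ∧
    h (b + u) - h (b + u - u / 2 ^ n) ≤ (2/3)^n * (h (b + u) - h b) := by
  induction n with
  | zero =>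
    simp only [pow_zero, one_mul, div_one, add_sub_cancel_right]
    exact ⟨le_refl _, le_refl _⟩
  | succ n ih =>
    set w := u / 2 ^ (n+1) with hw
    have hwpos : 0 < w := by positivity
    have hwδ : w < δ := half_lt hu huδ n
    set m := b + u - w with hm'
    have e1 : m + w = b + u := by rw [hm']; ring
    have e2 : m - w = b + u - u / 2 ^ n := by
      rw [hm', hw]; field_simp; ring
    have key := H m w hwpos hwδ
    rw [e1] at key
    set A := h m - h (m - w) with hA'
    set B := h (b + u) - h m with hB'
    have hApos : 0 < A := incr_pos' hm (by linarith)
    have hRn : h (b + u) - h (b + u - u / 2 ^ n) = A + B := by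
      rw [hA', hB', ← e2]; ring
    rw [hRn] at ih
    have hT : 0 < h (b + u) - h b := incr_pos' hm (by linarith)
    constructor
    · have h2 : (1/3 : ℝ)^(n+1) * (h (b+u) - h b) = (1/3) * ((1/3)^n * (h (b+u) - h b)) := by ring
      rw [h2]
      nlinarith [ih.1, key.1]
    · have h2 : (2/3 : ℝ)^(n+1) * (h (b+u) - h b) = (2/3) * ((2/3)^n * (h (b+u) - h b)) := by ring
      rw [h2]
      nlinarith [ih.2, key.2]

/-- bounds on the leftmost dyadic piece of `[b-u, b]` -/
lemma left_piece (hm : StrictMono h) {δ : ℝ}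
    (H : HalfSym h δ) (b : ℝ) {u : ℝ} (hu : 0 < u) (huδ : u < δ) (n : ℕ) :
    (1/3)^n * (h b - h (b - u)) ≤ h (b - u + u / 2 ^ n) - h (b - u) ∧
    h (b - u + u / 2 ^ n) - h (b - u) ≤ (2/3)^n * (h b - h (b - u)) := by
  induction n with
  | zero =>
    simp only [pow_zero, one_mul, div_one, sub_add_cancel]
    exact ⟨le_refl _, le_refl _⟩
  | succ n ih =>
    set w := u / 2 ^ (n+1) with hw
    have hwpos : 0 < w := by positivity
    have hwδ : w < δ := half_lt hu huδ n
    set m := b - u + w with hm'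
    have e1 : m - w = b - u := by rw [hm']; ring
    have e2 : m + w = b - u + u / 2 ^ n := by
      rw [hm', hw]; field_simp; ring
    have key := H m w hwpos hwδ
    rw [e1, e2] at key
    set A := h m - h (b - u) with hA'
    set B := h (b - u + u / 2 ^ n) - h m with hB'
    have hApos : 0 < A := by
      rw [hA']; exact incr_pos' hm (by linarith)
    have hLn : h (b - u + u / 2 ^ n) - h (b - u) = A + B := by
      rw [hA', hB']; ring
    rw [hLn] at ih
    have hT : 0 < h b - h (b - u) := incr_pos' hm (by linarith)
    constructor
    · have h2 : (1/3 : ℝ)^(n+1) * (h b - h (b-u)) = (1/3) * ((1/3)^n * (h b - h (b-u))) := by ring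
      rw [h2]
      nlinarith [ih.1, key.2]
    · have h2 : (2/3 : ℝ)^(n+1) * (h b - h (b-u)) = (2/3) * ((2/3)^n * (h b - h (b-u))) := by ring
      rw [h2]
      nlinarith [ih.1, ih.2, key.1]

lemma frac_lt {u δ : ℝ} (hu : 0 < u) (huδ : u < δ) (n : ℕ) : u / 2 ^ n < δ := by
  have h1 : (1:ℝ) ≤ 2 ^ n := by
    have := pow_le_pow_right₀ (by norm_num : (1:ℝ) ≤ 2) (Nat.zero_le n)
    simpa using this
  have : u / 2 ^ n ≤ u / 1 := div_le_div_of_nonneg_left (le_of_lt hu) (by norm_num) h1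
  rw [div_one] at this
  linarith

lemma frac_pos {u : ℝ} (hu : 0 < u) (n : ℕ) : 0 < u / 2 ^ n := by positivity

/-- right expansion: pushing `u` out by `u/2^n` increases the increment by a
definite factor. -/
lemma expand_right (hm : StrictMono h) {δ : ℝ}
    (H : HalfSym h δ) (b : ℝ) {u : ℝ} (hu : 0 < u) (huδ : u < δ) (n : ℕ) :
    (1 + (1/2) * (1/3)^n) * (h (b + u) - h b) ≤ h (b + u + u / 2 ^ n) - h b := by
  have key := H (b + u) (u / 2 ^ n) (frac_pos hu n) (frac_lt hu huδ n)
  have rp := right_piece hm H b hu huδ n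
  have hT : 0 < h (b + u) - h b := incr_pos' hm (by linarith)
  nlinarith [key.1, rp.1]

/-- right near-bound: pushing `u` out by `u/2^n` increases the increment by
little. -/
lemma near_right (hm : StrictMono h) {δ : ℝ}
    (H : HalfSym h δ) (b : ℝ) {u : ℝ} (hu : 0 < u) (huδ : u < δ) (n : ℕ) :
    h (b + u + u / 2 ^ n) - h b ≤ (1 + (3/2) * (2/3)^n) * (h (b + u) - h b) := by
  have key := H (b + u) (u / 2 ^ n) (frac_pos hu n) (frac_lt hu huδ n)
  have rp := right_piece hm H b hu huδ n
  have hT : 0 < h (b + u) - h b := incr_pos' hm (by linarith)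
  nlinarith [key.2, rp.2]

/-- pulling `u` in by `u/2^n` decreases the increment by little. -/
lemma near_right_low (hm : StrictMono h) {δ : ℝ}
    (H : HalfSym h δ) (b : ℝ) {u : ℝ} (hu : 0 < u) (huδ : u < δ) (n : ℕ) :
    (1 - (2/3)^n) * (h (b + u) - h b) ≤ h (b + u - u / 2 ^ n) - h b := by
  have rp := right_piece hm H b hu huδ n
  have hT : 0 < h (b + u) - h b := incr_pos' hm (by linarith)
  nlinarith [rp.2]

/-- left expansion. -/
lemma expand_left (hm : StrictMono h) {δ : ℝ}
    (H : HalfSym h δ) (b : ℝ) {u : ℝ} (hu : 0 < u) (huδ : u < δ) (n : ℕ) :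
    (1 + (1/2) * (1/3)^n) * (h b - h (b - u)) ≤ h b - h (b - u - u / 2 ^ n) := by
  have key := H (b - u) (u / 2 ^ n) (frac_pos hu n) (frac_lt hu huδ n)
  have lp := left_piece hm H b hu huδ n
  have hT : 0 < h b - h (b - u) := incr_pos' hm (by linarith)
  -- key.2 : h (b - u + u/2^n) - h (b-u) < 3/2 * (h (b-u) - h (b-u - u/2^n))
  nlinarith [key.2, lp.1]

lemma pow_half_mul {u : ℝ} (n : ℕ) : ((1:ℝ)/2)^n * u = u / 2 ^ n := by
  rw [div_pow, one_pow]; ring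

set_option maxHeartbeats 1000000 in
/-- Key near-symmetry lemma: for a symmetric `h`, increments over `[b, b+v]`
and `[b-u, b]` are comparable when `u, v` are small and `v/u` close to 1. -/
lemma near_sym (hm : StrictMono h)
    (hs : ∀ ε > (0:ℝ), ∃ δ > (0:ℝ), ∀ x t : ℝ, 0 < t → t < δ →
      |(h (x + t) - h x) / (h x - h (x - t)) - 1| < ε)
    {ε : ℝ} (hε : 0 < ε) :
    ∃ δ > (0:ℝ), ∃ η > (0:ℝ), ∀ b u v : ℝ, 0 < u → u < δ → 0 < v →
      (1 - η) * u ≤ v → v ≤ (1 + η) * u →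
      |(h (b + v) - h b) / (h b - h (b - u)) - 1| < ε := by
  set ε' := min ε 1 with hε'
  have hε'pos : 0 < ε' := lt_min hε (by norm_num)
  have hε'le1 : ε' ≤ 1 := min_le_right _ _
  have hε'leε : ε' ≤ ε := min_le_left _ _
  obtain ⟨n, hn⟩ := exists_pow_lt_of_lt_one (show (0:ℝ) < ε'/6 by linarith)
    (by norm_num : (2:ℝ)/3 < 1)
  obtain ⟨δ₂, hδ₂pos, hδ₂⟩ := hs (ε'/4) (by linarith)
  obtain ⟨δ₁, hδ₁pos, hδ₁⟩ := hs (1/2) (by norm_num)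
  have H : HalfSym h δ₁ := by
    intro x t ht htδ
    have hb := sym_mul hm hδ₁ x ht htδ
    exact ⟨by linarith [hb.1], by linarith [hb.2]⟩
  refine ⟨min δ₁ δ₂, lt_min hδ₁pos hδ₂pos, (1/2)^n, by positivity, ?_⟩
  intro b u v hu huδ hv hlow hupp
  have huδ₁ : u < δ₁ := lt_of_lt_of_le huδ (min_le_left _ _)
  have huδ₂ : u < δ₂ := lt_of_lt_of_le huδ (min_le_right _ _)
  have hD : 0 < h b - h (b - u) := incr_pos hm (by linarith)
  have hT : 0 < h (b + u) - h b := incr_pos hm (by linarith)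
  have hTv : 0 < h (b + v) - h b := incr_pos hm (by linarith)
  have hsymu := sym_mul hm hδ₂ b hu huδ₂
  have hpm := pow_half_mul (u := u) n
  -- upper bound
  have hvle : v ≤ u + u / 2 ^ n := by nlinarith [hupp]
  have up1 : h (b + v) - h b ≤ h (b + u + u / 2 ^ n) - h b := by
    have := hm.monotone (show b + v ≤ b + u + u / 2 ^ n by linarith)
    linarith
  have up2 := near_right hm H b hu huδ₁ n
  have p1 : 0 < ε'/4 - (3/2) * (2/3:ℝ)^n := by linarith
  have s1 : h (b + v) - h b ≤ (1 + ε'/4) * (h (b + u) - h b) := by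
    nlinarith [mul_pos p1 hT, up1, up2]
  have s2 : (1 + ε'/4) * (h (b + u) - h b) <
      (1 + ε'/4) * ((1 + ε'/4) * (h b - h (b - u))) :=
    mul_lt_mul_of_pos_left hsymu.2 (by linarith)
  have p2 : (0:ℝ) ≤ (1 + ε') - (1 + ε'/4) * (1 + ε'/4) := by nlinarith
  have upper : h (b + v) - h b < (1 + ε') * (h b - h (b - u)) := by
    nlinarith [s1, s2, mul_nonneg p2 hD.le]
  -- lower bound
  have hvge : u - u / 2 ^ n ≤ v := by nlinarith [hlow]
  have low1 : h (b + u - u / 2 ^ n) - h b ≤ h (b + v) - h b := by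
    have := hm.monotone (show b + u - u / 2 ^ n ≤ b + v by linarith)
    linarith
  have low2 := near_right_low hm H b hu huδ₁ n
  have s3 : (1 - ε'/4) * (h (b + u) - h b) ≤ h (b + v) - h b := by
    nlinarith [mul_pos p1 hT, low1, low2, mul_pos (show (0:ℝ) < ε'/4 - (2/3:ℝ)^n by linarith) hT]
  have s4 : (1 - ε'/4) * ((1 - ε'/4) * (h b - h (b - u))) <
      (1 - ε'/4) * (h (b + u) - h b) :=
    mul_lt_mul_of_pos_left hsymu.1 (by linarith)
  have p3 : (0:ℝ) ≤ (1 - ε'/4) * (1 - ε'/4) - (1 - ε') := by nlinarith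
  have lower : (1 - ε') * (h b - h (b - u)) < h (b + v) - h b := by
    nlinarith [s3, s4, mul_nonneg p3 hD.le]
  rw [abs_lt]
  constructor
  · have : 1 - ε' < (h (b + v) - h b) / (h b - h (b - u)) := by
      rw [lt_div_iff₀ hD]; linarith
    linarith
  · have : (h (b + v) - h b) / (h b - h (b - u)) < 1 + ε' := by
      rw [div_lt_iff₀ hD]; linarith
    linarith

set_option maxHeartbeats 1000000 in
/-- If the increments of symmetric `h` over `[b-u,b]` and `[b,b+v]` are equal
and small, then `v/u` is close to `1`. -/
lemma inv_near (hm : StrictMono h)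
    (hs : ∀ ε > (0:ℝ), ∃ δ > (0:ℝ), ∀ x t : ℝ, 0 < t → t < δ →
      |(h (x + t) - h x) / (h x - h (x - t)) - 1| < ε)
    {ε : ℝ} (hε : 0 < ε) :
    ∃ δ > (0:ℝ), ∀ b u v : ℝ, 0 < u → u < δ → 0 < v → v < δ →
      h (b + v) - h b = h b - h (b - u) → |v / u - 1| < ε := by
  set ε' := min ε (1/2) with hε'
  have hε'pos : 0 < ε' := lt_min hε (by norm_num)
  have hε'le : ε' ≤ 1/2 := min_le_right _ _
  have hε'leε : ε' ≤ ε := min_le_left _ _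
  obtain ⟨n, hn⟩ := exists_pow_lt_of_lt_one hε'pos (by norm_num : (1:ℝ)/2 < 1)
  set c := (1/2) * ((1:ℝ)/3)^n with hc
  have hcpos : 0 < c := by positivity
  have hcle : c ≤ 1/2 := by
    have h13 : ((1:ℝ)/3)^n ≤ 1 := pow_le_one₀ (by norm_num) (by norm_num)
    nlinarith
  obtain ⟨δ₂, hδ₂pos, hδ₂⟩ := hs (c/2) (by positivity)
  obtain ⟨δ₁, hδ₁pos, hδ₁⟩ := hs (1/2) (by norm_num)
  have H : HalfSym h δ₁ := by
    intro x t ht htδ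
    have hb := sym_mul hm hδ₁ x ht htδ
    exact ⟨by linarith [hb.1], by linarith [hb.2]⟩
  refine ⟨min δ₁ δ₂, lt_min hδ₁pos hδ₂pos, ?_⟩
  intro b u v hu huδ hv hvδ heq
  have huδ₁ : u < δ₁ := lt_of_lt_of_le huδ (min_le_left _ _)
  have huδ₂ : u < δ₂ := lt_of_lt_of_le huδ (min_le_right _ _)
  have hvδ₁ : v < δ₁ := lt_of_lt_of_le hvδ (min_le_left _ _)
  have hvδ₂ : v < δ₂ := lt_of_lt_of_le hvδ (min_le_right _ _)
  have hD : 0 < h b - h (b - u) := incr_pos hm (by linarith)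
  have claim1 : v < u + u / 2 ^ n := by
    by_contra hcon
    push_neg at hcon
    have mono : h (b + u + u / 2 ^ n) ≤ h (b + v) :=
      hm.monotone (by linarith)
    have e1 := expand_right hm H b hu huδ₁ n
    have hsymu := sym_mul hm hδ₂ b hu huδ₂
    have hT : 0 < h (b + u) - h b := incr_pos hm (by linarith)
    have key := mul_lt_mul_of_pos_left hsymu.1 (show (0:ℝ) < 1 + c by linarith)
    nlinarith [mul_pos (mul_pos hcpos hD) (show (0:ℝ) < 1 - c by linarith)]
  have claim2 : u < v + v / 2 ^ n := by
    by_contra hcon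
    push_neg at hcon
    have mono : h (b - u) ≤ h (b - v - v / 2 ^ n) :=
      hm.monotone (by linarith)
    have e1 := expand_left hm H b hv hvδ₁ n
    have hsymv := sym_mul hm hδ₂ b hv hvδ₂
    have hTv : 0 < h b - h (b - v) := incr_pos hm (by linarith)
    -- h(b+v) - h b < (1+c/2)(h b - h(b-v)) and
    -- D ≥ h b - h (b-v-v/2^n) ≥ (1+c)(h b - h (b-v))
    nlinarith [hsymv.2, mul_pos (mul_pos hcpos hTv) (show (0:ℝ) < 1 - c by linarith),
      mul_pos hcpos hTv]
  have pmu : ((1:ℝ)/2)^n * u = u / 2 ^ n := pow_half_mul n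
  have pmv : ((1:ℝ)/2)^n * v = v / 2 ^ n := pow_half_mul n
  rw [abs_lt]
  constructor
  · have hlt : (1 - ε') * u < v := by
      rcases le_or_gt v u with hvu | hvu
      · nlinarith [mul_lt_mul_of_pos_right hn hv, mul_le_mul_of_nonneg_left hvu
          (show (0:ℝ) ≤ (1/2)^n by positivity)]
      · nlinarith
    have : 1 - ε' < v / u := by rw [lt_div_iff₀ hu]; linarith
    linarith
  · have hlt : v < (1 + ε') * u := by
      nlinarith [mul_lt_mul_of_pos_right hn hu]
    have : v / u < 1 + ε' := by rw [div_lt_iff₀ hu]; linarith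
    linarith

end helpers


section main
open Function

lemma inv_mono {h k : ℝ → ℝ} (hm : StrictMono h)
    (hr : Function.RightInverse k h) : StrictMono k := by
  intro a b hab
  have hk : h (k a) < h (k b) := by rw [hr a, hr b]; exact hab
  by_contra hle
  exact absurd hk (not_lt.2 (hm.monotone (not_lt.1 hle)))

lemma one_le_two_pow' (n : ℕ) : (1:ℝ) ≤ 2 ^ n := by
  simpa using pow_le_pow_right₀ (by norm_num : (1:ℝ) ≤ 2) (Nat.zero_le n)

set_option maxHeartbeats 1000000 in
/-- the inverse of a quasisymmetric map is quasisymmetric -/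
lemma qs_inv {h k : ℝ → ℝ} (hq : Quasisymmetric h) (hl : Function.LeftInverse k h)
    (hr : Function.RightInverse k h) : Quasisymmetric k := by
  obtain ⟨hm, hsurj, M, hM, hQ⟩ := hq
  have km : StrictMono k := inv_mono hm hr
  have hMpos : (0:ℝ) < M := by linarith
  have h1M : (1:ℝ) < 1 + 1/M := by
    have : (0:ℝ) < 1/M := by positivity
    linarith
  obtain ⟨n, hn⟩ := pow_unbounded_of_one_lt M h1M
  refine ⟨km, fun x => ⟨h x, hl x⟩, 2 ^ n, one_le_two_pow' n, ?_⟩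
  intro y s hs
  have hu : 0 < k y - k (y - s) := sub_pos.2 (km (by linarith))
  have hv : 0 < k (y + s) - k y := sub_pos.2 (km (by linarith))
  have hky : h (k y) = y := hr y
  have hkys : h (k (y + s)) = y + s := hr (y + s)
  have hkyms : h (k (y - s)) = y - s := hr (y - s)
  have claimU : k (y + s) - k y ≤ 2 ^ n * (k y - k (y - s)) := by
    by_contra hcon
    push_neg at hcon
    have mono : h (k y + 2 ^ n * (k y - k (y - s))) ≤ h (k (y + s)) :=
      hm.monotone (by linarith)
    have d1 := doub_down_right hm hM hQ n (x := k y) hu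
    have d2 := qs_down hm hM hQ (x := k y) hu
    have e : k y - (k y - k (y - s)) = k (y - s) := by ring
    rw [e] at d2
    have hT : 0 < h (k y + (k y - k (y - s))) - h (k y) :=
      incr_pos hm (by linarith)
    nlinarith [mul_pos (show (0:ℝ) < (1 + 1/M) ^ n - M by linarith) hT]
  have claimL : k y - k (y - s) ≤ 2 ^ n * (k (y + s) - k y) := by
    by_contra hcon
    push_neg at hcon
    have mono : h (k (y - s)) ≤ h (k y - 2 ^ n * (k (y + s) - k y)) :=
      hm.monotone (by linarith)
    have d1 := doub_down_left hm hM hQ n (x := k y) hv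
    have d2 := qs_up hm hM hQ (x := k y) hv
    have e : k y + (k (y + s) - k y) = k (y + s) := by ring
    rw [e] at d2
    have hT : 0 < h (k y) - h (k y - (k (y + s) - k y)) :=
      incr_pos hm (by linarith)
    nlinarith [mul_pos (show (0:ℝ) < (1 + 1/M) ^ n - M by linarith) hT]
  constructor
  · rw [div_le_div_iff₀ (by positivity) hu]
    linarith [claimL]
  · rw [div_le_iff₀ hu]
    linarith [claimU]

set_option maxHeartbeats 1000000 in
/-- Part 1: the inverse of a symmetric homeomorphism with uniformly continuous
inverse is symmetric. -/
lemma sym_inv {h k : ℝ → ℝ} (hsym : SymmetricHomeo h)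
    (hl : Function.LeftInverse k h) (hr : Function.RightInverse k h)
    (huc : UniformContinuous k) : SymmetricHomeo k := by
  obtain ⟨hq, hs⟩ := hsym
  have hm : StrictMono h := hq.1
  have km : StrictMono k := inv_mono hm hr
  refine ⟨qs_inv hq hl hr, ?_⟩
  intro ε hε
  obtain ⟨δ, hδpos, hδ⟩ := inv_near hm hs hε
  obtain ⟨δs, hδspos, hδs⟩ := Metric.uniformContinuous_iff.1 huc δ hδpos
  refine ⟨δs, hδspos, ?_⟩
  intro y s hspos hsδ
  have hu : 0 < k y - k (y - s) := sub_pos.2 (km (by linarith))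
  have hv : 0 < k (y + s) - k y := sub_pos.2 (km (by linarith))
  have hud : k y - k (y - s) < δ := by
    have := hδs (a := y) (b := y - s) (by rw [Real.dist_eq]; rw [abs_of_pos] <;> linarith)
    rw [Real.dist_eq, abs_of_pos hu] at this
    exact this
  have hvd : k (y + s) - k y < δ := by
    have := hδs (a := y + s) (b := y) (by rw [Real.dist_eq]; rw [abs_of_pos] <;> linarith)
    rw [Real.dist_eq, abs_of_pos hv] at this
    exact this
  have heq : h (k y + (k (y + s) - k y)) - h (k y) =
      h (k y) - h (k y - (k y - k (y - s))) := by
    have e1 : k y + (k (y + s) - k y) = k (y + s) := by ring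
    have e2 : k y - (k y - k (y - s)) = k (y - s) := by ring
    rw [e1, e2, hr, hr, hr]
    ring
  exact hδ (k y) (k y - k (y - s)) (k (y + s) - k y) hu hud hv hvd heq

set_option maxHeartbeats 1000000 in
/-- composition of symmetric homeos with uniformly continuous pieces -/
lemma sym_comp {g h : ℝ → ℝ} (hg : SymmetricHomeo g) (hh : SymmetricHomeo h)
    (hhuc : UniformContinuous h) : SymmetricHomeo (g ∘ h) := by
  obtain ⟨⟨gm, gsurj, Mg, hMg, hQg⟩, hsg⟩ := hg
  obtain ⟨⟨hm, hsurj, Mh, hMh, hQh⟩, hsh⟩ := hh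
  have hMgpos : (0:ℝ) < Mg := by linarith
  have hMhpos : (0:ℝ) < Mh := by linarith
  constructor
  · -- quasisymmetric
    refine ⟨gm.comp hm, gsurj.comp hsurj, ?_⟩
    obtain ⟨n, hn⟩ := pow_unbounded_of_one_lt Mh (by norm_num : (1:ℝ) < 2)
    have hMg1 : (1:ℝ) ≤ (1 + Mg) ^ n * Mg := by
      have h1 : (1:ℝ) ≤ (1 + Mg) ^ n := by
        simpa using pow_le_pow_right₀ (by linarith : (1:ℝ) ≤ 1 + Mg) (Nat.zero_le n)
      nlinarith
    refine ⟨(1 + Mg) ^ n * Mg, hMg1, ?_⟩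
    intro x t ht
    have hu : 0 < h x - h (x - t) := incr_pos hm (by linarith)
    have hv : 0 < h (x + t) - h x := incr_pos hm (by linarith)
    have hvMu : h (x + t) - h x ≤ Mh * (h x - h (x - t)) := qs_up hm hMh hQh ht
    have huMv : h x - h (x - t) ≤ Mh * (h (x + t) - h x) := qs_down hm hMh hQh ht
    have e1 : g (h (x + t)) = g (h x + (h (x + t) - h x)) := by ring_nf
    have e2 : g (h (x - t)) = g (h x - (h x - h (x - t))) := by ring_nf
    have gU : 0 < g (h x) - g (h x - (h x - h (x - t))) :=
      incr_pos gm (by linarith)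
    have gV : 0 < g (h x + (h (x + t) - h x)) - g (h x) :=
      incr_pos gm (by linarith)
    -- upper bound
    have upb : g (h x + (h (x + t) - h x)) - g (h x) ≤
        (1 + Mg) ^ n * Mg * (g (h x) - g (h x - (h x - h (x - t)))) := by
      have mono : g (h x + (h (x + t) - h x)) ≤
          g (h x + 2 ^ n * (h x - h (x - t))) := by
        apply gm.monotone
        nlinarith
      have d1 := doub_up_right gm hMg hQg n (x := h x) hu
      have d2 := qs_up gm hMg hQg (x := h x) hu
      have hgpow : (0:ℝ) < (1 + Mg) ^ n := by positivity
      nlinarith [mul_le_mul_of_nonneg_left d2 hgpow.le]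
    -- lower bound
    have lob : g (h x) - g (h x - (h x - h (x - t))) ≤
        (1 + Mg) ^ n * Mg * (g (h x + (h (x + t) - h x)) - g (h x)) := by
      have mono : g (h x - 2 ^ n * (h (x + t) - h x)) ≤
          g (h x - (h x - h (x - t))) := by
        apply gm.monotone
        nlinarith
      have d1 := doub_up_left gm hMg hQg n (x := h x) hv
      have d2 := qs_down gm hMg hQg (x := h x) hv
      have hgpow : (0:ℝ) < (1 + Mg) ^ n := by positivity
      nlinarith [mul_le_mul_of_nonneg_left d2 hgpow.le]
    have hMpos : (0:ℝ) < (1 + Mg) ^ n * Mg := by positivity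
    constructor
    · simp only [Function.comp_apply]
      rw [e1, e2, div_le_div_iff₀ hMpos gU]
      nlinarith [lob]
    · simp only [Function.comp_apply]
      rw [e1, e2, div_le_iff₀ gU]
      nlinarith [upb]
  · -- symmetry
    intro ε hε
    obtain ⟨δg, hδgpos, η, hηpos, hkey⟩ := near_sym gm hsg hε
    obtain ⟨δh, hδhpos, hδh⟩ := hsh η hηpos
    obtain ⟨δu, hδupos, hδu⟩ := Metric.uniformContinuous_iff.1 hhuc δg hδgpos
    refine ⟨min δh δu, lt_min hδhpos hδupos, ?_⟩
    intro x t ht htδ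
    have htδh : t < δh := lt_of_lt_of_le htδ (min_le_left _ _)
    have htδu : t < δu := lt_of_lt_of_le htδ (min_le_right _ _)
    have hu : 0 < h x - h (x - t) := incr_pos hm (by linarith)
    have hv : 0 < h (x + t) - h x := incr_pos hm (by linarith)
    have hud : h x - h (x - t) < δg := by
      have := hδu (a := x) (b := x - t) (by rw [Real.dist_eq]; rw [abs_of_pos] <;> linarith)
      rw [Real.dist_eq, abs_of_pos hu] at this
      exact this
    have hratio := hδh x t ht htδh
    rw [abs_lt] at hratio
    have hlow : (1 - η) * (h x - h (x - t)) ≤ h (x + t) - h x := by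
      have h1 : 1 - η < (h (x + t) - h x) / (h x - h (x - t)) := by linarith [hratio.1]
      have := (lt_div_iff₀ hu).1 h1
      linarith
    have hupp : h (x + t) - h x ≤ (1 + η) * (h x - h (x - t)) := by
      have h1 : (h (x + t) - h x) / (h x - h (x - t)) < 1 + η := by linarith [hratio.2]
      have := (div_lt_iff₀ hu).1 h1
      linarith
    have key := hkey (h x) (h x - h (x - t)) (h (x + t) - h x) hu hud hv hlow hupp
    have e1 : g (h (x + t)) = g (h x + (h (x + t) - h x)) := by ring_nf
    have e2 : g (h (x - t)) = g (h x - (h x - h (x - t))) := by ring_nf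
    simp only [Function.comp_apply]
    rw [e1, e2]
    exact key

end main

/-- if `h` is a symmetric homeomorphism of ℝ and `h⁻¹` is uniformly
continuous, then `h⁻¹` is symmetric; consequently the set of symmetric
homeomorphisms `h` with `h, h⁻¹` uniformly continuous is a subgroup of the
quasisymmetric group. -/
theorem stmt11 :
    (∀ h hinv : ℝ → ℝ, SymmetricHomeo h →
      Function.LeftInverse hinv h → Function.RightInverse hinv h →
      UniformContinuous hinv → SymmetricHomeo hinv) ∧
    Suc (id : ℝ → ℝ) ∧
    (∀ h : ℝ → ℝ, Suc h → Quasisymmetric h) ∧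
    (∀ g h : ℝ → ℝ, Suc g → Suc h → Suc (g ∘ h)) ∧
    (∀ h k : ℝ → ℝ, Suc h → Function.LeftInverse k h → Function.RightInverse k h →
      Suc k) := by
  have idq : ∀ x t : ℝ, 0 < t →
      (id (x + t) - id x) / (id x - id (x - t)) = 1 := by
    intro x t ht
    simp only [id_eq]
    rw [show x + t - x = t by ring, show x - (x - t) = t by ring]
    exact div_self (ne_of_gt ht)
  refine ⟨fun h hinv hs hl hr huc => sym_inv hs hl hr huc, ?_, fun h hs => hs.1.1, ?_, ?_⟩
  · refine ⟨⟨⟨strictMono_id, Function.surjective_id, 1, le_refl 1, ?_⟩, ?_⟩,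
      uniformContinuous_id, id, fun x => rfl, fun x => rfl, uniformContinuous_id⟩
    · intro x t ht
      rw [idq x t ht]
      norm_num
    · intro ε hε
      refine ⟨1, one_pos, fun x t ht _ => ?_⟩
      rw [idq x t ht]
      simpa using hε
  · rintro g h ⟨gsym, guc, kg, kgl, kgr, kguc⟩ ⟨hsym2, huc2, kh, khl, khr, khuc⟩
    refine ⟨sym_comp gsym hsym2 huc2, guc.comp huc2, kh ∘ kg, ?_, ?_, khuc.comp kguc⟩
    · intro x
      simp only [Function.comp_apply]
      rw [kgl, khl]
    · intro y
      simp only [Function.comp_apply]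
      rw [khr, kgr]
  · rintro h k ⟨hsym2, huc2, k₀, k₀l, k₀r, k₀uc⟩ hl hr
    have hkk : k = k₀ := funext fun y => by
      have h1 := congrArg k (k₀r y)
      rw [hl (k₀ y)] at h1
      exact h1.symm
    have kuc : UniformContinuous k := by rw [hkk]; exact k₀uc
    exact ⟨sym_inv hsym2 hl hr kuc, kuc, h, hr, hl, huc2⟩
end

section
/- If v ∈ VMO(𝕊) on the unit circle, then u = v ∘ T ∈ VMO(ℝ), where T(z) = (z−i)/(z+i) is the Cayley transformation restricted to ℝ → 𝕊∖{1}. -/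
open MeasureTheory

/-- The mean oscillation of `u` over the interval `[a, b]`. -/
noncomputable def meanOsc (u : ℝ → ℝ) (a b : ℝ) : ℝ :=
  (b - a)⁻¹ * ∫ x in a..b, |u x - (b - a)⁻¹ * ∫ y in a..b, u y|


noncomputable def cay (x : ℝ) : ℝ := 2 * Real.arctan x - Real.pi
noncomputable def cw (x : ℝ) : ℝ := 2 / (1 + x ^ 2)

lemma one_add_sq_pos (x : ℝ) : (0:ℝ) < 1 + x ^ 2 := by positivity

lemma cw_pos (x : ℝ) : 0 < cw x := by
  unfold cw; positivity

lemma cay_hasDerivAt (x : ℝ) : HasDerivAt cay (cw x) x := by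
  have h := (Real.hasDerivAt_arctan x).const_mul (2:ℝ)
  have h2 : HasDerivAt (fun x => 2 * Real.arctan x - Real.pi) (2 * (1 / (1 + x ^ 2))) x := h.sub_const _
  have : 2 * (1 / (1 + x ^ 2)) = cw x := by unfold cw; ring
  rw [this] at h2; exact h2

lemma cay_strictMono : StrictMono cay := fun a b h => by
  unfold cay
  have := Real.arctan_strictMono h
  linarith

lemma cay_cont : Continuous cay := by
  unfold cay; continuity

lemma cay_mem (x : ℝ) : cay x ∈ Set.Ioo (-(2 * Real.pi)) 0 := by
  unfold cay
  have h1 := Real.arctan_lt_pi_div_two x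
  have h2 := Real.neg_pi_div_two_lt_arctan x
  constructor <;> [linarith; linarith]

lemma cay_neg (x : ℝ) : cay (-x) = -(2 * Real.pi) - cay x := by
  unfold cay; rw [Real.arctan_neg]; ring

lemma cay_cos (x : ℝ) : Real.cos (cay x) = (x ^ 2 - 1) / (1 + x ^ 2) := by
  unfold cay
  have h : 2 * Real.arctan x - Real.pi = -(Real.pi - 2 * Real.arctan x) := by ring
  rw [h, Real.cos_neg, Real.cos_pi_sub, Real.cos_two_mul, Real.cos_arctan]
  have h2 : (0:ℝ) < 1 + x ^ 2 := one_add_sq_pos x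
  rw [div_pow, one_pow, Real.sq_sqrt h2.le]
  field_simp
  ring

lemma cay_sin (x : ℝ) : Real.sin (cay x) = -(2 * x) / (1 + x ^ 2) := by
  unfold cay
  have h : 2 * Real.arctan x - Real.pi = -(Real.pi - 2 * Real.arctan x) := by ring
  rw [h, Real.sin_neg, Real.sin_pi_sub, Real.sin_two_mul, Real.sin_arctan, Real.cos_arctan]
  have h2 : (0:ℝ) < 1 + x ^ 2 := one_add_sq_pos x
  have h3 : Real.sqrt (1 + x ^ 2) ≠ 0 := by positivity
  have hs2 : Real.sqrt (1 + x ^ 2) * Real.sqrt (1 + x ^ 2) = 1 + x ^ 2 :=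
    Real.mul_self_sqrt h2.le
  field_simp
  rw [Real.sq_sqrt h2.le]

lemma cayley_arg (x : ℝ) : ∃ t : ℝ, (t = cay x ∨ t = cay x + 2 * Real.pi) ∧
    Complex.arg ((x - Complex.I) / (x + Complex.I)) = t := by
  set t : ℝ := if 0 < x then cay x else cay x + 2 * Real.pi with ht
  refine ⟨t, by by_cases h : 0 < x <;> simp [ht, h], ?_⟩
  have hc : Real.cos t = (x ^ 2 - 1) / (1 + x ^ 2) := by
    by_cases h : 0 < x <;> simp only [ht, if_pos, if_neg, h, if_true, if_false]
    · exact cay_cos x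
    · rw [Real.cos_add_two_pi]; exact cay_cos x
  have hs : Real.sin t = -(2 * x) / (1 + x ^ 2) := by
    by_cases h : 0 < x <;> simp only [ht, h, if_true, if_false]
    · exact cay_sin x
    · rw [Real.sin_add_two_pi]; exact cay_sin x
  have hne : ((x:ℂ) + Complex.I) ≠ 0 := by
    intro h
    have := congrArg Complex.im h
    simp at this
  have hd : ((1:ℂ) + (x:ℂ) ^ 2) ≠ 0 := by
    have h1 : ((1 + x ^ 2 : ℝ) : ℂ) ≠ 0 := Complex.ofReal_ne_zero.mpr (one_add_sq_pos x).ne'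
    push_cast at h1
    exact h1
  have hz : ((x:ℂ) - Complex.I) / ((x:ℂ) + Complex.I)
      = Complex.cos t + Complex.sin t * Complex.I := by
    rw [← Complex.ofReal_cos, ← Complex.ofReal_sin, hc, hs]
    rw [div_eq_iff hne]
    push_cast
    field_simp
    ring_nf
    rw [Complex.I_sq]
    ring
  rw [hz]
  apply Complex.arg_cos_add_sin_mul_I
  have h1 := (cay_mem x).1
  have h2 := (cay_mem x).2
  have hpi := Real.pi_pos
  by_cases h : 0 < x
  · simp only [ht, h, if_true]
    constructor
    · unfold cay
      have : 0 < Real.arctan x := by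
        rw [← Real.arctan_zero]
        exact Real.arctan_strictMono h
      linarith
    · linarith
  · simp only [ht, h, if_false]
    constructor
    · linarith
    · unfold cay
      have : Real.arctan x ≤ 0 := by
        rw [← Real.arctan_zero]
        exact Real.arctan_strictMono.monotone (not_lt.mp h)
      linarith
lemma meanOsc_nonneg (u : ℝ → ℝ) (a b : ℝ) (hab : a ≤ b) : 0 ≤ meanOsc u a b := by
  unfold meanOsc
  apply mul_nonneg
  · simp [sub_nonneg, hab]
  · exact intervalIntegral.integral_nonneg hab (fun x _ => abs_nonneg _)

lemma cay_image (a b : ℝ) (hab : a ≤ b) : cay '' Set.Icc a b = Set.Icc (cay a) (cay b) := by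
  apply Set.Subset.antisymm
  · rintro _ ⟨x, hx, rfl⟩
    exact ⟨cay_strictMono.monotone hx.1, cay_strictMono.monotone hx.2⟩
  · exact intermediate_value_Icc hab cay_cont.continuousOn

lemma cay_cov (a b : ℝ) (hab : a ≤ b) (h : ℝ → ℝ) :
    ∫ t in (cay a)..(cay b), h t = ∫ x in a..b, cw x * h (cay x) := by
  rw [intervalIntegral.integral_of_le hab,
    intervalIntegral.integral_of_le (cay_strictMono.monotone hab),
    ← MeasureTheory.integral_Icc_eq_integral_Ioc, ← MeasureTheory.integral_Icc_eq_integral_Ioc,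
    ← cay_image a b hab,
    MeasureTheory.integral_image_eq_integral_abs_deriv_smul measurableSet_Icc
      (fun x _ => (cay_hasDerivAt x).hasDerivWithinAt) (cay_strictMono.injective.injOn) h]
  have heq : ∀ x : ℝ, |cw x| • h (cay x) = cw x * h (cay x) := fun x => by
    rw [smul_eq_mul, abs_of_pos (cw_pos x)]
  simp_rw [heq]

lemma cay_integrableOn (a b : ℝ) (hab : a ≤ b) (h : ℝ → ℝ)
    (hh : MeasureTheory.IntegrableOn h (Set.Icc (cay a) (cay b)) MeasureTheory.volume) :
    MeasureTheory.IntegrableOn (fun x => cw x * h (cay x)) (Set.Icc a b) MeasureTheory.volume := by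
  rw [← cay_image a b hab] at hh
  have h2 := (MeasureTheory.integrableOn_image_iff_integrableOn_abs_deriv_smul measurableSet_Icc
      (fun x _ => (cay_hasDerivAt x).hasDerivWithinAt) (cay_strictMono.injective.injOn) h).mp hh
  apply h2.congr_fun (fun x _ => ?_) measurableSet_Icc
  rw [smul_eq_mul, abs_of_pos (cw_pos x)]

lemma comp_integrableOn (v : ℝ → ℝ) (hloc : MeasureTheory.LocallyIntegrable v MeasureTheory.volume)
    (a b : ℝ) (hab : a ≤ b) :
    MeasureTheory.IntegrableOn (fun x => v (cay x)) (Set.Icc a b) MeasureTheory.volume := by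
  have h1 := cay_integrableOn a b hab v (hloc.integrableOn_isCompact isCompact_Icc)
  have h2 := MeasureTheory.IntegrableOn.continuousOn_mul
    (g := fun x : ℝ => (1 + x ^ 2) / 2) (by fun_prop) h1 isCompact_Icc
  apply h2.congr_fun (fun x _ => ?_) measurableSet_Icc
  unfold cw
  have := one_add_sq_pos x
  field_simp

lemma comp_intervalIntegrable (v : ℝ → ℝ)
    (hloc : MeasureTheory.LocallyIntegrable v MeasureTheory.volume) (u : ℝ → ℝ)
    (huv : ∀ x, u x = v (cay x)) (a b : ℝ) :
    IntervalIntegrable u MeasureTheory.volume a b := by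
  rw [intervalIntegrable_iff]
  have h1 := comp_integrableOn v hloc (min a b) (max a b) (min_le_max)
  have h2 : MeasureTheory.IntegrableOn u (Set.Icc (min a b) (max a b)) MeasureTheory.volume :=
    h1.congr_fun (fun x _ => (huv x).symm) measurableSet_Icc
  exact h2.mono_set Set.Ioc_subset_Icc_self

lemma abs_sub_intervalIntegrable (f : ℝ → ℝ) (a b c : ℝ)
    (hf : IntervalIntegrable f MeasureTheory.volume a b) :
    IntervalIntegrable (fun x => |f x - c|) MeasureTheory.volume a b :=
  (hf.sub ((intervalIntegrable_const (c := c)))).abs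

lemma avg_sub_le (f : ℝ → ℝ) (a b c : ℝ) (hab : a < b)
    (hf : IntervalIntegrable f MeasureTheory.volume a b) :
    |(b - a)⁻¹ * (∫ x in a..b, f x) - c| ≤ (b - a)⁻¹ * ∫ x in a..b, |f x - c| := by
  have hba : (0:ℝ) < b - a := by linarith
  have h1 : (b - a)⁻¹ * (∫ x in a..b, f x) - c = (b - a)⁻¹ * ∫ x in a..b, (f x - c) := by
    rw [intervalIntegral.integral_sub hf ((intervalIntegrable_const (c := c))),
      intervalIntegral.integral_const, smul_eq_mul, mul_sub]
    field_simp
  rw [h1, abs_mul, abs_of_pos (by positivity : (0:ℝ) < (b - a)⁻¹)]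
  exact mul_le_mul_of_nonneg_left
    (intervalIntegral.abs_integral_le_integral_abs hab.le) (by positivity)

lemma meanOsc_le_two (f : ℝ → ℝ) (a b c : ℝ) (hab : a < b)
    (hf : IntervalIntegrable f MeasureTheory.volume a b) :
    meanOsc f a b ≤ 2 * ((b - a)⁻¹ * ∫ x in a..b, |f x - c|) := by
  have hba : (0:ℝ) < b - a := by linarith
  set m := (b - a)⁻¹ * ∫ y in a..b, f y with hm
  have havg : |m - c| ≤ (b - a)⁻¹ * ∫ x in a..b, |f x - c| := avg_sub_le f a b c hab hf
  unfold meanOsc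
  rw [← hm]
  have hint : ∫ x in a..b, |f x - m| ≤ (∫ x in a..b, |f x - c|) + (b - a) * |c - m| := by
    have hle : ∀ x ∈ Set.Icc a b, |f x - m| ≤ |f x - c| + |c - m| := fun x _ => by
      calc |f x - m| = |(f x - c) + (c - m)| := by ring_nf
        _ ≤ |f x - c| + |c - m| := abs_add_le _ _
    calc ∫ x in a..b, |f x - m|
        ≤ ∫ x in a..b, (|f x - c| + |c - m|) := by
          apply intervalIntegral.integral_mono_on hab.le
            (abs_sub_intervalIntegrable f a b m hf)
            ((abs_sub_intervalIntegrable f a b c hf).add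
              ((intervalIntegrable_const (c := _)))) hle
      _ = (∫ x in a..b, |f x - c|) + (b - a) * |c - m| := by
          rw [intervalIntegral.integral_add (abs_sub_intervalIntegrable f a b c hf)
            ((intervalIntegrable_const (c := _))), intervalIntegral.integral_const,
            smul_eq_mul]
  have h2 : (b - a)⁻¹ * ∫ x in a..b, |f x - m|
      ≤ (b - a)⁻¹ * ((∫ x in a..b, |f x - c|) + (b - a) * |c - m|) :=
    mul_le_mul_of_nonneg_left hint (by positivity)
  rw [mul_add] at h2
  have h3 : (b - a)⁻¹ * ((b - a) * |c - m|) = |c - m| := by field_simp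
  rw [h3] at h2
  rw [abs_sub_comm] at havg
  linarith

lemma avg_nested (f : ℝ → ℝ) (A a b B c : ℝ) (hAa : A ≤ a) (hab : a < b) (hbB : b ≤ B)
    (hf : IntervalIntegrable f MeasureTheory.volume A B) :
    |(b - a)⁻¹ * (∫ x in a..b, f x) - c| ≤ (b - a)⁻¹ * ∫ x in A..B, |f x - c| := by
  have hsub : IntervalIntegrable f MeasureTheory.volume a b :=
    hf.mono_set (Set.uIcc_subset_uIcc_iff_le.mpr
      ⟨by rw [min_eq_left hab.le, min_eq_left (hAa.trans (hab.le.trans hbB))]; exact hAa,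
       by rw [max_eq_right hab.le, max_eq_right (hAa.trans (hab.le.trans hbB))]; exact hbB⟩)
  refine (avg_sub_le f a b c hab hsub).trans ?_
  apply mul_le_mul_of_nonneg_left ?_ (inv_nonneg.mpr (by linarith))
  apply intervalIntegral.integral_mono_interval hAa hab.le hbB
    (Filter.Eventually.of_forall (fun x => abs_nonneg _))
    (abs_sub_intervalIntegrable f A B c hf)
noncomputable def iavg (f : ℝ → ℝ) (a b : ℝ) : ℝ := (b - a)⁻¹ * ∫ x in a..b, f x

lemma meanOsc_eq (f : ℝ → ℝ) (a b : ℝ) :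
    meanOsc f a b = (b - a)⁻¹ * ∫ x in a..b, |f x - iavg f a b| := rfl

lemma integral_abs_sub_avg (f : ℝ → ℝ) (a b : ℝ) (hab : a < b) :
    ∫ x in a..b, |f x - iavg f a b| = (b - a) * meanOsc f a b := by
  rw [meanOsc_eq]
  have : (0:ℝ) < b - a := by linarith
  field_simp

lemma avg_drift (f : ℝ → ℝ) (A a b B : ℝ) (hAa : A ≤ a) (hab : a < b) (hbB : b ≤ B)
    (hf : IntervalIntegrable f MeasureTheory.volume A B) :
    |iavg f a b - iavg f A B| ≤ (b - a)⁻¹ * ((B - A) * meanOsc f A B) := by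
  have hAB : A < B := lt_of_le_of_lt hAa (lt_of_lt_of_le hab hbB)
  have h := avg_nested f A a b B (iavg f A B) hAa hab hbB hf
  rwa [integral_abs_sub_avg f A B hAB] at h

lemma cw_continuous : Continuous cw :=
  continuous_const.div (by continuity) (fun x => (one_add_sq_pos x).ne')

lemma cay_sub_eq_integral (a b : ℝ) : ∫ x in a..b, cw x = cay b - cay a :=
  intervalIntegral.integral_eq_sub_of_hasDerivAt (fun x _ => cay_hasDerivAt x)
    (cw_continuous.intervalIntegrable a b)

set_option maxHeartbeats 1000000 in
lemma transfer (v u : ℝ → ℝ) (hloc : MeasureTheory.LocallyIntegrable v MeasureTheory.volume)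
    (huv : ∀ x, u x = v (cay x)) (a b c m M : ℝ) (hab : a < b) (hm : 0 < m)
    (hmM : ∀ x ∈ Set.Icc a b, m ≤ cw x ∧ cw x ≤ M) :
    (b - a)⁻¹ * (∫ x in a..b, |u x - c|)
      ≤ (M / m) * ((cay b - cay a)⁻¹ * ∫ t in (cay a)..(cay b), |v t - c|) := by
  have hca : cay a < cay b := cay_strictMono hab
  have hD : (0:ℝ) < b - a := by linarith
  have hE : (0:ℝ) < cay b - cay a := by linarith
  have hvInt : MeasureTheory.IntegrableOn (fun t => |v t - c|)
      (Set.Icc (cay a) (cay b)) MeasureTheory.volume := by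
    have h1 : MeasureTheory.IntegrableOn v (Set.Icc (cay a) (cay b)) MeasureTheory.volume :=
      hloc.integrableOn_isCompact isCompact_Icc
    have h2 : MeasureTheory.IntegrableOn (fun _ : ℝ => c)
        (Set.Icc (cay a) (cay b)) MeasureTheory.volume :=
      MeasureTheory.integrableOn_const measure_Icc_lt_top.ne
    exact (h1.sub h2).abs
  have hpull : MeasureTheory.IntegrableOn (fun x => cw x * |v (cay x) - c|)
      (Set.Icc a b) MeasureTheory.volume :=
    cay_integrableOn a b hab.le (fun t => |v t - c|) hvInt
  have hpullII : IntervalIntegrable (fun x => cw x * |v (cay x) - c|)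
      MeasureTheory.volume a b := by
    rw [intervalIntegrable_iff, Set.uIoc_of_le hab.le]
    exact hpull.mono_set Set.Ioc_subset_Icc_self
  have huII : IntervalIntegrable (fun x => |u x - c|) MeasureTheory.volume a b :=
    abs_sub_intervalIntegrable u a b c (comp_intervalIntegrable v hloc u huv a b)
  set J := ∫ x in a..b, cw x * |v (cay x) - c| with hJdef
  have hJ0 : 0 ≤ J := intervalIntegral.integral_nonneg hab.le
    (fun x _ => mul_nonneg (cw_pos x).le (abs_nonneg _))
  have step1 : (∫ x in a..b, |u x - c|) ≤ m⁻¹ * J := by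
    rw [hJdef, ← intervalIntegral.integral_const_mul]
    apply intervalIntegral.integral_mono_on hab.le huII (hpullII.const_mul _)
    intro x hx
    rw [huv x]
    have h1 := (hmM x hx).1
    have h2 := abs_nonneg (v (cay x) - c)
    have h3 : m * |v (cay x) - c| ≤ cw x * |v (cay x) - c| :=
      mul_le_mul_of_nonneg_right h1 h2
    have h4 : |v (cay x) - c| = m⁻¹ * (m * |v (cay x) - c|) := by
      rw [← mul_assoc, inv_mul_cancel₀ hm.ne', one_mul]
    calc |v (cay x) - c| = m⁻¹ * (m * |v (cay x) - c|) := h4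
      _ ≤ m⁻¹ * (cw x * |v (cay x) - c|) :=
          mul_le_mul_of_nonneg_left h3 (inv_nonneg.mpr hm.le)
  have hEM : cay b - cay a ≤ M * (b - a) := by
    rw [← cay_sub_eq_integral a b]
    calc ∫ x in a..b, cw x ≤ ∫ _x in a..b, M :=
          intervalIntegral.integral_mono_on hab.le (cw_continuous.intervalIntegrable a b)
            ((intervalIntegrable_const (c := M))) (fun x hx => (hmM x hx).2)
      _ = M * (b - a) := by rw [intervalIntegral.integral_const, smul_eq_mul]; ring
  have hcov : ∫ t in (cay a)..(cay b), |v t - c| = J := cay_cov a b hab.le (fun t => |v t - c|)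
  rw [hcov]
  have lhs_le : (b - a)⁻¹ * (∫ x in a..b, |u x - c|) ≤ (b - a)⁻¹ * (m⁻¹ * J) :=
    mul_le_mul_of_nonneg_left step1 (inv_nonneg.mpr hD.le)
  refine lhs_le.trans ?_
  have h5 : (b - a)⁻¹ * (m⁻¹ * J) = J / (m * (b - a)) := by
    rw [div_eq_mul_inv, mul_inv]; ring
  have h6 : (M / m) * ((cay b - cay a)⁻¹ * J) = (M * J) / (m * (cay b - cay a)) := by
    rw [div_eq_mul_inv, div_eq_mul_inv, mul_inv]; ring
  rw [h5, h6, div_le_div_iff₀ (by positivity) (by positivity)]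
  nlinarith [mul_le_mul_of_nonneg_left hEM (mul_nonneg hm.le hJ0)]
lemma cay_arc_le (a b : ℝ) : cay b - cay a ≤ 2 * Real.pi := by
  have h1 := (cay_mem b).2
  have h2 := (cay_mem a).1
  linarith

lemma cw_le_two (x : ℝ) : cw x ≤ 2 := by
  unfold cw
  rw [div_le_iff₀ (one_add_sq_pos x)]
  nlinarith [sq_nonneg x]

lemma cw_anti (x y : ℝ) (h : x ^ 2 ≤ y ^ 2) : cw y ≤ cw x := by
  unfold cw
  apply div_le_div_of_nonneg_left (by norm_num) (one_add_sq_pos x) (by nlinarith)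

lemma meanOsc_le_of_cw (v u : ℝ → ℝ)
    (hloc : MeasureTheory.LocallyIntegrable v MeasureTheory.volume)
    (huv : ∀ x, u x = v (cay x)) (B : ℝ)
    (hB : ∀ a b : ℝ, a < b → b - a ≤ 2 * Real.pi → meanOsc v a b ≤ B)
    (a b m M r : ℝ) (hab : a < b) (hm : 0 < m)
    (hmM : ∀ x ∈ Set.Icc a b, m ≤ cw x ∧ cw x ≤ M) (hr : M / m ≤ r) :
    meanOsc u a b ≤ 2 * r * B := by
  have hca : cay a < cay b := cay_strictMono hab
  have harc := cay_arc_le a b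
  have h4 : meanOsc v (cay a) (cay b) ≤ B := hB _ _ hca harc
  have hosc0 : 0 ≤ meanOsc v (cay a) (cay b) := meanOsc_nonneg v _ _ hca.le
  have hB0 : 0 ≤ B := le_trans hosc0 h4
  have haI : a ∈ Set.Icc a b := Set.left_mem_Icc.mpr hab.le
  have hM0 : 0 < M := lt_of_lt_of_le hm ((hmM a haI).1.trans (hmM a haI).2)
  have hr0 : 0 ≤ M / m := (div_pos hM0 hm).le
  set c := iavg v (cay a) (cay b) with hc
  have h1 := meanOsc_le_two u a b c hab (comp_intervalIntegrable v hloc u huv a b)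
  have h2 := transfer v u hloc huv a b c m M hab hm hmM
  have h3 : (cay b - cay a)⁻¹ * ∫ t in (cay a)..(cay b), |v t - c|
      = meanOsc v (cay a) (cay b) := (meanOsc_eq v (cay a) (cay b)).symm
  rw [h3] at h2
  calc meanOsc u a b ≤ 2 * ((b - a)⁻¹ * ∫ x in a..b, |u x - c|) := h1
    _ ≤ 2 * ((M / m) * meanOsc v (cay a) (cay b)) := by linarith
    _ ≤ 2 * (r * B) := by
        have := mul_le_mul hr h4 hosc0 (hr0.trans hr)
        linarith
    _ = 2 * r * B := by ring

lemma avg_close (v u : ℝ → ℝ)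
    (hloc : MeasureTheory.LocallyIntegrable v MeasureTheory.volume)
    (huv : ∀ x, u x = v (cay x)) (B : ℝ)
    (hB : ∀ a b : ℝ, a < b → b - a ≤ 2 * Real.pi → meanOsc v a b ≤ B)
    (a b m M r : ℝ) (hab : a < b) (hm : 0 < m)
    (hmM : ∀ x ∈ Set.Icc a b, m ≤ cw x ∧ cw x ≤ M) (hr : M / m ≤ r) :
    |iavg u a b - iavg v (cay a) (cay b)| ≤ r * B := by
  have hca : cay a < cay b := cay_strictMono hab
  have harc := cay_arc_le a b
  have h4 : meanOsc v (cay a) (cay b) ≤ B := hB _ _ hca harc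
  have hosc0 : 0 ≤ meanOsc v (cay a) (cay b) := meanOsc_nonneg v _ _ hca.le
  have haI : a ∈ Set.Icc a b := Set.left_mem_Icc.mpr hab.le
  have hM0 : 0 < M := lt_of_lt_of_le hm ((hmM a haI).1.trans (hmM a haI).2)
  have hr0 : 0 ≤ M / m := (div_pos hM0 hm).le
  set c := iavg v (cay a) (cay b) with hc
  have h0 := avg_sub_le u a b c hab (comp_intervalIntegrable v hloc u huv a b)
  have h2 := transfer v u hloc huv a b c m M hab hm hmM
  have h3 : (cay b - cay a)⁻¹ * ∫ t in (cay a)..(cay b), |v t - c|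
      = meanOsc v (cay a) (cay b) := (meanOsc_eq v (cay a) (cay b)).symm
  rw [h3] at h2
  have h5 : (M / m) * meanOsc v (cay a) (cay b) ≤ r * B :=
    mul_le_mul hr h4 hosc0 (hr0.trans hr)
  have h6 : |iavg u a b - c| = |(b - a)⁻¹ * (∫ x in a..b, u x) - c| := rfl
  rw [h6]
  linarith [abs_nonneg (iavg u a b - c)]

lemma cw_ratio_pos (a b : ℝ) (ha : (1 + a^2) > 0) (hb : (1 + b^2) > 0) :
    cw a / cw b = (1 + b ^ 2) / (1 + a ^ 2) := by
  unfold cw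
  rw [div_div_div_comm]
  field_simp

lemma oscP (v u : ℝ → ℝ) (hloc : MeasureTheory.LocallyIntegrable v MeasureTheory.volume)
    (huv : ∀ x, u x = v (cay x)) (B : ℝ)
    (hB : ∀ a b : ℝ, a < b → b - a ≤ 2 * Real.pi → meanOsc v a b ≤ B)
    (a b r : ℝ) (ha : 0 < a) (hab : a < b) (hr : 1 + b ^ 2 ≤ r * (1 + a ^ 2)) :
    meanOsc u a b ≤ 2 * r * B := by
  apply meanOsc_le_of_cw v u hloc huv B hB a b (cw b) (cw a) r hab (cw_pos b)
  · intro x hx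
    exact ⟨cw_anti x b (by nlinarith [hx.1, hx.2]), cw_anti a x (by nlinarith [hx.1, hx.2])⟩
  · rw [cw_ratio_pos a b (one_add_sq_pos a) (one_add_sq_pos b),
      div_le_iff₀ (one_add_sq_pos a)]
    linarith

lemma oscN (v u : ℝ → ℝ) (hloc : MeasureTheory.LocallyIntegrable v MeasureTheory.volume)
    (huv : ∀ x, u x = v (cay x)) (B : ℝ)
    (hB : ∀ a b : ℝ, a < b → b - a ≤ 2 * Real.pi → meanOsc v a b ≤ B)
    (a b r : ℝ) (hb : b < 0) (hab : a < b) (hr : 1 + a ^ 2 ≤ r * (1 + b ^ 2)) :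
    meanOsc u a b ≤ 2 * r * B := by
  apply meanOsc_le_of_cw v u hloc huv B hB a b (cw a) (cw b) r hab (cw_pos a)
  · intro x hx
    exact ⟨cw_anti x a (by nlinarith [hx.1, hx.2]), cw_anti b x (by nlinarith [hx.1, hx.2])⟩
  · rw [cw_ratio_pos b a (one_add_sq_pos b) (one_add_sq_pos a),
      div_le_iff₀ (one_add_sq_pos b)]
    linarith

lemma oscC (v u : ℝ → ℝ) (hloc : MeasureTheory.LocallyIntegrable v MeasureTheory.volume)
    (huv : ∀ x, u x = v (cay x)) (B : ℝ)
    (hB : ∀ a b : ℝ, a < b → b - a ≤ 2 * Real.pi → meanOsc v a b ≤ B)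
    (a b : ℝ) (ha : -1 ≤ a) (hab : a < b) (hb : b ≤ 1) :
    meanOsc u a b ≤ 4 * B := by
  have h := meanOsc_le_of_cw v u hloc huv B hB a b 1 2 2 hab one_pos ?_ (by norm_num)
  · linarith
  · intro x hx
    constructor
    · unfold cw
      rw [le_div_iff₀ (one_add_sq_pos x)]
      nlinarith [hx.1, hx.2]
    · exact cw_le_two x

lemma avgP (v u : ℝ → ℝ) (hloc : MeasureTheory.LocallyIntegrable v MeasureTheory.volume)
    (huv : ∀ x, u x = v (cay x)) (B : ℝ)
    (hB : ∀ a b : ℝ, a < b → b - a ≤ 2 * Real.pi → meanOsc v a b ≤ B)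
    (a b r : ℝ) (ha : 0 < a) (hab : a < b) (hr : 1 + b ^ 2 ≤ r * (1 + a ^ 2)) :
    |iavg u a b - iavg v (cay a) (cay b)| ≤ r * B := by
  apply avg_close v u hloc huv B hB a b (cw b) (cw a) r hab (cw_pos b)
  · intro x hx
    exact ⟨cw_anti x b (by nlinarith [hx.1, hx.2]), cw_anti a x (by nlinarith [hx.1, hx.2])⟩
  · rw [cw_ratio_pos a b (one_add_sq_pos a) (one_add_sq_pos b),
      div_le_iff₀ (one_add_sq_pos a)]
    linarith

lemma avgN (v u : ℝ → ℝ) (hloc : MeasureTheory.LocallyIntegrable v MeasureTheory.volume)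
    (huv : ∀ x, u x = v (cay x)) (B : ℝ)
    (hB : ∀ a b : ℝ, a < b → b - a ≤ 2 * Real.pi → meanOsc v a b ≤ B)
    (a b r : ℝ) (hb : b < 0) (hab : a < b) (hr : 1 + a ^ 2 ≤ r * (1 + b ^ 2)) :
    |iavg u a b - iavg v (cay a) (cay b)| ≤ r * B := by
  apply avg_close v u hloc huv B hB a b (cw a) (cw b) r hab (cw_pos a)
  · intro x hx
    exact ⟨cw_anti x a (by nlinarith [hx.1, hx.2]), cw_anti b x (by nlinarith [hx.1, hx.2])⟩
  · rw [cw_ratio_pos b a (one_add_sq_pos b) (one_add_sq_pos a),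
      div_le_iff₀ (one_add_sq_pos b)]
    linarith
lemma meanOsc_le_of_cw' (v u : ℝ → ℝ)
    (hloc : MeasureTheory.LocallyIntegrable v MeasureTheory.volume)
    (huv : ∀ x, u x = v (cay x))
    (a b m M r : ℝ) (hab : a < b) (hm : 0 < m)
    (hmM : ∀ x ∈ Set.Icc a b, m ≤ cw x ∧ cw x ≤ M) (hr : M / m ≤ r) :
    meanOsc u a b ≤ 2 * r * meanOsc v (cay a) (cay b) := by
  have hca : cay a < cay b := cay_strictMono hab
  have hosc0 : 0 ≤ meanOsc v (cay a) (cay b) := meanOsc_nonneg v _ _ hca.le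
  have haI : a ∈ Set.Icc a b := Set.left_mem_Icc.mpr hab.le
  have hM0 : 0 < M := lt_of_lt_of_le hm ((hmM a haI).1.trans (hmM a haI).2)
  have hr0 : 0 ≤ M / m := (div_pos hM0 hm).le
  set c := iavg v (cay a) (cay b) with hc
  have h1 := meanOsc_le_two u a b c hab (comp_intervalIntegrable v hloc u huv a b)
  have h2 := transfer v u hloc huv a b c m M hab hm hmM
  have h3 : (cay b - cay a)⁻¹ * ∫ t in (cay a)..(cay b), |v t - c|
      = meanOsc v (cay a) (cay b) := (meanOsc_eq v (cay a) (cay b)).symm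
  rw [h3] at h2
  have h5 : (M / m) * meanOsc v (cay a) (cay b) ≤ r * meanOsc v (cay a) (cay b) :=
    mul_le_mul_of_nonneg_right hr hosc0
  calc meanOsc u a b ≤ 2 * ((b - a)⁻¹ * ∫ x in a..b, |u x - c|) := h1
    _ ≤ 2 * (r * meanOsc v (cay a) (cay b)) := by linarith
    _ = 2 * r * meanOsc v (cay a) (cay b) := by ring

lemma vmo_small (v u : ℝ → ℝ)
    (hloc : MeasureTheory.LocallyIntegrable v MeasureTheory.volume)
    (huv : ∀ x, u x = v (cay x)) (a b : ℝ) (hab : a < b) (hd : b - a ≤ 1) :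
    meanOsc u a b ≤ 6 * meanOsc v (cay a) (cay b) := by
  have hosc0 : 0 ≤ meanOsc v (cay a) (cay b) :=
    meanOsc_nonneg v _ _ (cay_strictMono hab).le
  rcases lt_trichotomy 0 a with ha | ha | ha
  · -- positive case : ratio 3
    have h := meanOsc_le_of_cw' v u hloc huv a b (cw b) (cw a) 3 hab (cw_pos b)
      (fun x hx => ⟨cw_anti x b (by nlinarith [hx.1, hx.2]),
        cw_anti a x (by nlinarith [hx.1, hx.2])⟩)
      (by
        rw [cw_ratio_pos a b (one_add_sq_pos a) (one_add_sq_pos b),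
          div_le_iff₀ (one_add_sq_pos a)]
        nlinarith [sq_nonneg (a - 1),
          mul_nonneg (by linarith : (0:ℝ) ≤ a + 1 - b) (by linarith : (0:ℝ) ≤ a + 1 + b)])
    linarith
  · -- a = 0 : interval in [-1,1]
    have h := meanOsc_le_of_cw' v u hloc huv a b 1 2 2 hab one_pos
      (fun x hx => ⟨by
        unfold cw
        rw [le_div_iff₀ (one_add_sq_pos x)]
        nlinarith [hx.1, hx.2], cw_le_two x⟩) (by norm_num)
    linarith
  · rcases lt_trichotomy b 0 with hb | hb | hb
    · -- negative case
      have h := meanOsc_le_of_cw' v u hloc huv a b (cw a) (cw b) 3 hab (cw_pos a)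
        (fun x hx => ⟨cw_anti x a (by nlinarith [hx.1, hx.2]),
          cw_anti b x (by nlinarith [hx.1, hx.2])⟩)
        (by
          rw [cw_ratio_pos b a (one_add_sq_pos b) (one_add_sq_pos a),
            div_le_iff₀ (one_add_sq_pos b)]
          nlinarith [sq_nonneg (b + 1),
            mul_nonneg (by linarith : (0:ℝ) ≤ 1 - b + a) (by linarith : (0:ℝ) ≤ 1 - b - a)])
      linarith
    · have h := meanOsc_le_of_cw' v u hloc huv a b 1 2 2 hab one_pos
        (fun x hx => ⟨by
          unfold cw
          rw [le_div_iff₀ (one_add_sq_pos x)]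
          nlinarith [hx.1, hx.2], cw_le_two x⟩) (by norm_num)
      linarith
    · -- a < 0 < b, both within distance 1
      have h := meanOsc_le_of_cw' v u hloc huv a b 1 2 2 hab one_pos
        (fun x hx => ⟨by
          unfold cw
          rw [le_div_iff₀ (one_add_sq_pos x)]
          nlinarith [hx.1, hx.2], cw_le_two x⟩) (by norm_num)
      linarith

lemma cay_arc_le_two_len (a b : ℝ) (hab : a ≤ b) : cay b - cay a ≤ 2 * (b - a) := by
  rw [← cay_sub_eq_integral a b]
  calc ∫ x in a..b, cw x ≤ ∫ _x in a..b, (2:ℝ) :=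
        intervalIntegral.integral_mono_on hab (cw_continuous.intervalIntegrable a b)
          ((intervalIntegrable_const (c := 2))) (fun x _ => cw_le_two x)
    _ = 2 * (b - a) := by rw [intervalIntegral.integral_const, smul_eq_mul]; ring
lemma loc_II (v : ℝ → ℝ) (hloc : MeasureTheory.LocallyIntegrable v MeasureTheory.volume)
    (a b : ℝ) : IntervalIntegrable v MeasureTheory.volume a b := by
  rw [intervalIntegrable_iff]
  exact (hloc.integrableOn_isCompact (isCompact_Icc (a := min a b) (b := max a b))).mono_set
    Set.Ioc_subset_Icc_self

lemma arctan_le_self' {x : ℝ} (hx : 0 ≤ x) : Real.arctan x ≤ x := by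
  have hd : ∀ y : ℝ, HasDerivAt (fun z => z - Real.arctan z) (1 - 1 / (1 + y ^ 2)) y :=
    fun y => (hasDerivAt_id y).sub (Real.hasDerivAt_arctan y)
  have hmono : Monotone (fun z => z - Real.arctan z) := by
    apply monotone_of_deriv_nonneg
    · exact fun y => ((hd y).differentiableAt)
    · intro y
      rw [(hd y).deriv]
      have h1 := one_add_sq_pos y
      have h2 : 1 / (1 + y ^ 2) ≤ 1 := by
        rw [div_le_one h1]; nlinarith [sq_nonneg y]
      linarith
  have := hmono hx
  simp [Real.arctan_zero] at this
  linarith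

lemma arctan_diff_ge {y₁ y₂ : ℝ} (h0 : 0 ≤ y₁) (h12 : y₁ ≤ y₂) (h1 : y₂ ≤ 1) :
    (y₂ - y₁) / 2 ≤ Real.arctan y₂ - Real.arctan y₁ := by
  have hd : ∀ y : ℝ, HasDerivAt (fun z => Real.arctan z - z / 2) (1 / (1 + y ^ 2) - 1 / 2) y :=
    fun y => (Real.hasDerivAt_arctan y).sub ((hasDerivAt_id y).div_const 2)
  have hmono : MonotoneOn (fun z => Real.arctan z - z / 2) (Set.Icc (0:ℝ) 1) := by
    apply monotoneOn_of_deriv_nonneg (convex_Icc 0 1)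
    · exact fun y _ => ((hd y).differentiableAt).continuousAt.continuousWithinAt
    · exact fun y _ => ((hd y).differentiableAt).differentiableWithinAt
    · intro y hy
      rw [interior_Icc] at hy
      rw [(hd y).deriv]
      have h1 := one_add_sq_pos y
      have h2 : 1 + y ^ 2 ≤ 2 := by nlinarith [hy.1.le, hy.2.le]
      have h3 : (1:ℝ) / 2 ≤ 1 / (1 + y ^ 2) := by
        apply div_le_div_of_nonneg_left (by norm_num) h1 h2
      linarith
  have := hmono (Set.mem_Icc.mpr ⟨h0, h12.trans h1⟩)
    (Set.mem_Icc.mpr ⟨h0.trans h12, h1⟩) h12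
  simp only at this
  linarith

lemma periodize (f : ℝ → ℝ) (hf : ∀ t, f (t + 2 * Real.pi) = f t) (a b : ℝ) :
    ∫ x in (a + 2 * Real.pi)..(b + 2 * Real.pi), f x = ∫ x in a..b, f x := by
  rw [← intervalIntegral.integral_comp_add_right f (2 * Real.pi)]
  apply intervalIntegral.integral_congr
  intro x _
  exact hf x

lemma iavg_shift (f : ℝ → ℝ) (hf : ∀ t, f (t + 2 * Real.pi) = f t) (a b : ℝ) :
    iavg f (a + 2 * Real.pi) (b + 2 * Real.pi) = iavg f a b := by
  unfold iavg
  rw [periodize f hf a b]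
  ring_nf

lemma cay_one : cay 1 = -(Real.pi / 2) := by
  unfold cay; rw [Real.arctan_one]; ring

lemma cay_pos_inv (s : ℝ) (hs : 0 < s) : cay s = -(2 * Real.arctan s⁻¹) := by
  unfold cay
  rw [Real.arctan_inv_of_pos hs]
  ring

lemma cross (v u : ℝ → ℝ) (hloc : MeasureTheory.LocallyIntegrable v MeasureTheory.volume)
    (hper : ∀ θ : ℝ, v (θ + 2 * Real.pi) = v θ)
    (huv : ∀ x, u x = v (cay x)) (B : ℝ)
    (hB : ∀ a b : ℝ, a < b → b - a ≤ 2 * Real.pi → meanOsc v a b ≤ B)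
    (s : ℝ) (hs : 1 ≤ s) :
    |iavg u s (2 * s) - iavg u (-(2 * s)) (-s)| ≤ 24 * B := by
  have hs0 : (0:ℝ) < s := lt_of_lt_of_le one_pos hs
  set p := cay s with hp
  set q := cay (2 * s) with hq
  have hpq : p < q := cay_strictMono (by linarith)
  have hq0 : q < 0 := (cay_mem (2 * s)).2
  have hp0 : p < 0 := (cay_mem s).2
  have hphalf : -(Real.pi / 2) ≤ p := by
    rw [hp, ← cay_one]; exact cay_strictMono.monotone hs
  -- A1 : right side
  have hA1 : |iavg u s (2 * s) - iavg v p q| ≤ 4 * B := by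
    apply avgP v u hloc huv B hB s (2 * s) 4 hs0 (by linarith)
    nlinarith [sq_nonneg s]
  -- A2 : left side
  have hA2 : |iavg u (-(2 * s)) (-s) - iavg v (cay (-(2 * s))) (cay (-s))| ≤ 4 * B := by
    apply avgN v u hloc huv B hB (-(2 * s)) (-s) 4 (by linarith) (by linarith)
    nlinarith [sq_nonneg s]
  -- A3 : the left arc is the mirror arc
  have hA3 : iavg v (cay (-(2 * s))) (cay (-s)) = iavg v (-q) (-p) := by
    have e1 : cay (-(2 * s)) = -q + -(2 * Real.pi) := by
      rw [cay_neg (2 * s), ← hq]; ring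
    have e2 : cay (-s) = -p + -(2 * Real.pi) := by
      rw [cay_neg s, ← hp]; ring
    rw [e1, e2]
    have := iavg_shift v hper (-q + -(2 * Real.pi)) (-p + -(2 * Real.pi))
    simp only [neg_add_cancel_right, add_assoc] at this
    rw [← this]
    norm_num
  -- the length comparison : -2p ≤ 8 (q - p)
  have hlen : -(2 * p) ≤ 8 * (q - p) := by
    have e1 : p = -(2 * Real.arctan s⁻¹) := cay_pos_inv s hs0
    have e2 : q = -(2 * Real.arctan (2 * s)⁻¹) := cay_pos_inv (2 * s) (by linarith)
    have h1 : (0:ℝ) ≤ (2 * s)⁻¹ := by positivity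
    have h2 : (2 * s)⁻¹ ≤ s⁻¹ := by
      apply inv_anti₀ hs0; linarith
    have h3 : s⁻¹ ≤ 1 := by
      rw [inv_le_one_iff₀]; right; exact hs
    have h4 := arctan_diff_ge h1 h2 h3
    have h5 : Real.arctan s⁻¹ ≤ s⁻¹ := arctan_le_self' (by positivity)
    have h6 : s⁻¹ - (2 * s)⁻¹ = (2 * s)⁻¹ := by
      field_simp; ring
    rw [e1, e2]
    rw [h6] at h4
    -- arctan s⁻¹ ≤ s⁻¹ = 2 * (2*s)⁻¹ ≤ 2 * (2 * (arctan s⁻¹ - arctan (2s)⁻¹))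
    have h7 : Real.arctan s⁻¹ - Real.arctan (2 * s)⁻¹ ≥ (2 * s)⁻¹ / 2 := h4
    have h8 : (2:ℝ) * (2 * s)⁻¹ = s⁻¹ := by field_simp
    nlinarith
  -- meanOsc of v on the symmetric arc [p, -p]
  have hW : meanOsc v p (-p) ≤ B := by
    apply hB p (-p) (by linarith)
    have := Real.pi_pos
    linarith [hphalf]
  have hW0 : 0 ≤ meanOsc v p (-p) := meanOsc_nonneg v p (-p) (by linarith)
  have hvII : IntervalIntegrable v MeasureTheory.volume p (-p) := loc_II v hloc p (-p)
  -- A4 : |iavg v p q - iavg v p (-p)| ≤ 8 B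
  have hA4 : |iavg v p q - iavg v p (-p)| ≤ 8 * B := by
    have h := avg_drift v p p q (-p) (le_refl p) hpq (by linarith) hvII
    have hfac : (q - p)⁻¹ * ((-p - p) * meanOsc v p (-p)) ≤ 8 * B := by
      rw [← mul_assoc]
      have hqp : (0:ℝ) < q - p := by linarith
      have h1 : (q - p)⁻¹ * (-p - p) ≤ 8 := by
        rw [inv_mul_le_iff₀ hqp]
        nlinarith
      have := mul_le_mul h1 hW hW0 (by norm_num)
      linarith [mul_le_mul h1 hW hW0 (by norm_num : (0:ℝ) ≤ 8)]
    exact h.trans hfac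
  -- A5 : |iavg v (-q) (-p) - iavg v p (-p)| ≤ 8 B
  have hA5 : |iavg v (-q) (-p) - iavg v p (-p)| ≤ 8 * B := by
    have h := avg_drift v p (-q) (-p) (-p) (by linarith) (by linarith) (le_refl (-p)) hvII
    have hfac : (-p - -q)⁻¹ * ((-p - p) * meanOsc v p (-p)) ≤ 8 * B := by
      rw [← mul_assoc]
      have hqp : (0:ℝ) < -p - -q := by linarith
      have h1 : (-p - -q)⁻¹ * (-p - p) ≤ 8 := by
        rw [inv_mul_le_iff₀ hqp]
        nlinarith
      linarith [mul_le_mul h1 hW hW0 (by norm_num : (0:ℝ) ≤ 8)]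
    exact h.trans hfac
  rw [hA3] at hA2
  have := abs_sub_abs_le_abs_sub (iavg u s (2 * s) - iavg v p q)
    (iavg u (-(2 * s)) (-s) - iavg v (-q) (-p))
  calc |iavg u s (2 * s) - iavg u (-(2 * s)) (-s)|
      ≤ |iavg u s (2 * s) - iavg v p q| + |iavg v p q - iavg v p (-p)|
        + |iavg v p (-p) - iavg v (-q) (-p)| + |iavg v (-q) (-p) - iavg u (-(2 * s)) (-s)| := by
        have h1 := abs_sub_le (iavg u s (2 * s)) (iavg v p q) (iavg v p (-p))
        have h2 := abs_sub_le (iavg u s (2 * s)) (iavg v p (-p)) (iavg v (-q) (-p))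
        have h3 := abs_sub_le (iavg u s (2 * s)) (iavg v (-q) (-p)) (iavg u (-(2 * s)) (-s))
        linarith
    _ ≤ 4 * B + 8 * B + 8 * B + 4 * B := by
        rw [abs_sub_comm (iavg v p (-p)) (iavg v (-q) (-p)), abs_sub_comm (iavg v (-q) (-p)) (iavg u (-(2 * s)) (-s))]
        exact add_le_add (add_le_add (add_le_add hA1 hA4) hA5) hA2
    _ = 24 * B := by ring
lemma int_abs_shift (f : ℝ → ℝ) (a b c c' : ℝ) (hab : a ≤ b)
    (hf : IntervalIntegrable f MeasureTheory.volume a b) :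
    ∫ x in a..b, |f x - c'| ≤ (∫ x in a..b, |f x - c|) + (b - a) * |c - c'| := by
  have hle : ∀ x ∈ Set.Icc a b, |f x - c'| ≤ |f x - c| + |c - c'| := fun x _ => by
    calc |f x - c'| = |(f x - c) + (c - c')| := by ring_nf
      _ ≤ |f x - c| + |c - c'| := abs_add_le _ _
  calc ∫ x in a..b, |f x - c'|
      ≤ ∫ x in a..b, (|f x - c| + |c - c'|) :=
        intervalIntegral.integral_mono_on hab (abs_sub_intervalIntegrable f a b c' hf)
          ((abs_sub_intervalIntegrable f a b c hf).add
            ((intervalIntegrable_const (c := _)))) hle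
    _ = (∫ x in a..b, |f x - c|) + (b - a) * |c - c'| := by
        rw [intervalIntegral.integral_add (abs_sub_intervalIntegrable f a b c hf)
          ((intervalIntegrable_const (c := _))), intervalIntegral.integral_const,
          smul_eq_mul]

lemma ring_drift (v u : ℝ → ℝ)
    (hloc : MeasureTheory.LocallyIntegrable v MeasureTheory.volume)
    (huv : ∀ x, u x = v (cay x)) (B : ℝ)
    (hB : ∀ a b : ℝ, a < b → b - a ≤ 2 * Real.pi → meanOsc v a b ≤ B)
    (s : ℝ) (hs : 0 < s) :
    |iavg u s (2 * s) - iavg u (2 * s) (4 * s)| ≤ 144 * B := by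
  have hosc : meanOsc u s (4 * s) ≤ 32 * B := by
    have h := oscP v u hloc huv B hB s (4 * s) 16 hs (by linarith) (by nlinarith)
    linarith
  have hosc0 : 0 ≤ meanOsc u s (4 * s) := meanOsc_nonneg u _ _ (by linarith)
  have hII := comp_intervalIntegrable v hloc u huv s (4 * s)
  have h1 := avg_drift u s s (2 * s) (4 * s) le_rfl (by linarith) (by linarith) hII
  have h2 := avg_drift u s (2 * s) (4 * s) (4 * s) (by linarith) (by linarith) le_rfl hII
  have e1 : (2 * s - s)⁻¹ * ((4 * s - s) * meanOsc u s (4 * s)) = 3 * meanOsc u s (4 * s) := by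
    have : 2 * s - s = s := by ring
    rw [this]
    field_simp
    ring
  have e2 : (4 * s - 2 * s)⁻¹ * ((4 * s - s) * meanOsc u s (4 * s))
      = (3 / 2) * meanOsc u s (4 * s) := by
    have : 4 * s - 2 * s = 2 * s := by ring
    rw [this]
    field_simp
    ring
  rw [e1] at h1
  rw [e2] at h2
  have := abs_sub_le (iavg u s (2 * s)) (iavg u s (4 * s)) (iavg u (2 * s) (4 * s))
  rw [abs_sub_comm (iavg u s (4 * s)) (iavg u (2 * s) (4 * s))] at this
  linarith

lemma center_drift (v u : ℝ → ℝ)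
    (hloc : MeasureTheory.LocallyIntegrable v MeasureTheory.volume)
    (huv : ∀ x, u x = v (cay x)) (B : ℝ)
    (hB : ∀ a b : ℝ, a < b → b - a ≤ 2 * Real.pi → meanOsc v a b ≤ B) :
    |iavg u (-1) 1 - iavg u 1 2| ≤ 45 * B := by
  have hosc : meanOsc u (-1) 2 ≤ 10 * B := by
    have h := meanOsc_le_of_cw v u hloc huv B hB (-1) 2 (2 / 5) 2 5 (by norm_num)
      (by norm_num) ?_ (by norm_num)
    · linarith
    · intro x hx
      constructor
      · unfold cw
        apply div_le_div_of_nonneg_left (by norm_num) (one_add_sq_pos x)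
        nlinarith [hx.1, hx.2]
      · exact cw_le_two x
  have hosc0 : 0 ≤ meanOsc u (-1) 2 := meanOsc_nonneg u _ _ (by norm_num)
  have hII := comp_intervalIntegrable v hloc u huv (-1) 2
  have h1 := avg_drift u (-1) (-1) 1 2 le_rfl (by norm_num) (by norm_num) hII
  have h2 := avg_drift u (-1) 1 2 2 (by norm_num) (by norm_num) le_rfl hII
  have e1 : ((1:ℝ) - -1)⁻¹ * ((2 - -1) * meanOsc u (-1) 2) = (3 / 2) * meanOsc u (-1) 2 := by
    norm_num
    ring
  have e2 : ((2:ℝ) - 1)⁻¹ * ((2 - -1) * meanOsc u (-1) 2) = 3 * meanOsc u (-1) 2 := by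
    norm_num
  rw [e1] at h1
  rw [e2] at h2
  have := abs_sub_le (iavg u (-1) 1) (iavg u (-1) 2) (iavg u 1 2)
  rw [abs_sub_comm (iavg u (-1) 2) (iavg u 1 2)] at this
  linarith

lemma step_bound (v u : ℝ → ℝ)
    (hloc : MeasureTheory.LocallyIntegrable v MeasureTheory.volume)
    (hper : ∀ θ : ℝ, v (θ + 2 * Real.pi) = v θ)
    (huv : ∀ x, u x = v (cay x)) (B : ℝ)
    (hB : ∀ a b : ℝ, a < b → b - a ≤ 2 * Real.pi → meanOsc v a b ≤ B)
    (A K : ℝ) (hA : 1 ≤ A)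
    (ih : ∫ x in (-A)..A, |u x - iavg u A (2 * A)| ≤ K) :
    ∫ x in (-(2 * A))..(2 * A), |u x - iavg u (2 * A) (4 * A)| ≤ K + 616 * B * A := by
  have hA0 : (0:ℝ) < A := lt_of_lt_of_le one_pos hA
  set q0 := iavg u A (2 * A) with hq0
  set q1 := iavg u (2 * A) (4 * A) with hq1
  set qL := iavg u (-(2 * A)) (-A) with hqL
  have hB0 : 0 ≤ B := by
    have h := hB 0 1 one_pos (by nlinarith [Real.pi_gt_three])
    exact le_trans (meanOsc_nonneg v 0 1 one_pos.le) h
  have hqd : |q0 - q1| ≤ 144 * B := ring_drift v u hloc huv B hB A hA0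
  have hcross : |q0 - qL| ≤ 24 * B := cross v u hloc hper huv B hB A hA
  have hoscR : meanOsc u A (2 * A) ≤ 8 * B := by
    have h := oscP v u hloc huv B hB A (2 * A) 4 hA0 (by linarith) (by nlinarith)
    linarith
  have hoscL : meanOsc u (-(2 * A)) (-A) ≤ 8 * B := by
    have h := oscN v u hloc huv B hB (-(2 * A)) (-A) 4 (by linarith) (by linarith)
      (by nlinarith)
    linarith
  have hII1 : IntervalIntegrable (fun x => |u x - q1|) MeasureTheory.volume (-(2 * A)) (-A) :=
    abs_sub_intervalIntegrable u _ _ _ (comp_intervalIntegrable v hloc u huv _ _)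
  have hII2 : IntervalIntegrable (fun x => |u x - q1|) MeasureTheory.volume (-A) A :=
    abs_sub_intervalIntegrable u _ _ _ (comp_intervalIntegrable v hloc u huv _ _)
  have hII3 : IntervalIntegrable (fun x => |u x - q1|) MeasureTheory.volume A (2 * A) :=
    abs_sub_intervalIntegrable u _ _ _ (comp_intervalIntegrable v hloc u huv _ _)
  have hsplit : ∫ x in (-(2 * A))..(2 * A), |u x - q1|
      = (∫ x in (-(2 * A))..(-A), |u x - q1|) + (∫ x in (-A)..A, |u x - q1|)
        + ∫ x in A..(2 * A), |u x - q1| := by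
    have s1 := intervalIntegral.integral_add_adjacent_intervals hII1 hII2
    have s2 := intervalIntegral.integral_add_adjacent_intervals (hII1.trans hII2) hII3
    linarith
  -- middle piece
  have hmid : ∫ x in (-A)..A, |u x - q1| ≤ K + (2 * A) * (144 * B) := by
    have h := int_abs_shift u (-A) A q0 q1 (by linarith)
      (comp_intervalIntegrable v hloc u huv _ _)
    have hfac : (A - -A) * |q0 - q1| ≤ (2 * A) * (144 * B) := by
      have : A - -A = 2 * A := by ring
      rw [this]
      apply mul_le_mul_of_nonneg_left hqd (by linarith)
    linarith
  -- right piece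
  have hright : ∫ x in A..(2 * A), |u x - q1| ≤ A * (8 * B) + A * (144 * B) := by
    have h := int_abs_shift u A (2 * A) q0 q1 (by linarith)
      (comp_intervalIntegrable v hloc u huv _ _)
    have e : ∫ x in A..(2 * A), |u x - q0| = (2 * A - A) * meanOsc u A (2 * A) :=
      integral_abs_sub_avg u A (2 * A) (by linarith)
    rw [e] at h
    have e2 : 2 * A - A = A := by ring
    rw [e2] at h
    have hb1 : A * meanOsc u A (2 * A) ≤ A * (8 * B) :=
      mul_le_mul_of_nonneg_left hoscR hA0.le
    have hb2 : (2 * A - A) * |q0 - q1| ≤ A * (144 * B) := by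
      rw [e2]
      exact mul_le_mul_of_nonneg_left hqd hA0.le
    linarith
  -- left piece
  have hleft : ∫ x in (-(2 * A))..(-A), |u x - q1| ≤ A * (8 * B) + A * (168 * B) := by
    have h := int_abs_shift u (-(2 * A)) (-A) qL q1 (by linarith)
      (comp_intervalIntegrable v hloc u huv _ _)
    have e : ∫ x in (-(2 * A))..(-A), |u x - qL| = (-A - -(2 * A)) * meanOsc u (-(2 * A)) (-A) :=
      integral_abs_sub_avg u (-(2 * A)) (-A) (by linarith)
    rw [e] at h
    have e2 : -A - -(2 * A) = A := by ring
    rw [e2] at h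
    have hb1 : A * meanOsc u (-(2 * A)) (-A) ≤ A * (8 * B) :=
      mul_le_mul_of_nonneg_left hoscL hA0.le
    have hqq : |qL - q1| ≤ 168 * B := by
      have h3 := abs_sub_le qL q0 q1
      rw [abs_sub_comm qL q0] at h3
      linarith
    have hb2 : (-A - -(2 * A)) * |qL - q1| ≤ A * (168 * B) := by
      rw [e2]
      exact mul_le_mul_of_nonneg_left hqq hA0.le
    linarith
  rw [hsplit]
  nlinarith [hA0]

lemma dyadic_bound (v u : ℝ → ℝ)
    (hloc : MeasureTheory.LocallyIntegrable v MeasureTheory.volume)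
    (hper : ∀ θ : ℝ, v (θ + 2 * Real.pi) = v θ)
    (huv : ∀ x, u x = v (cay x)) (B : ℝ)
    (hB : ∀ a b : ℝ, a < b → b - a ≤ 2 * Real.pi → meanOsc v a b ≤ B) :
    ∀ n : ℕ, ∫ x in (-(2 ^ n : ℝ))..(2 ^ n : ℝ),
      |u x - iavg u (2 ^ n) (2 ^ (n + 1))| ≤ 1000 * B * 2 ^ n := by
  have hB0 : 0 ≤ B := by
    have h := hB 0 1 one_pos (by nlinarith [Real.pi_gt_three])
    exact le_trans (meanOsc_nonneg v 0 1 one_pos.le) h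
  intro n
  induction n with
  | zero =>
    have e0 : ((2:ℝ) ^ (0:ℕ)) = 1 := by norm_num
    have e1 : ((2:ℝ) ^ (0+1:ℕ)) = 2 := by norm_num
    rw [e0, e1]
    have hII := comp_intervalIntegrable v hloc u huv (-1) 1
    have h1 := int_abs_shift u (-1) 1 (iavg u (-1) 1) (iavg u 1 2) (by norm_num) hII
    have e : ∫ x in (-1:ℝ)..1, |u x - iavg u (-1) 1| = (1 - -1) * meanOsc u (-1) 1 :=
      integral_abs_sub_avg u (-1) 1 (by norm_num)
    rw [e] at h1
    have hosc : meanOsc u (-1) 1 ≤ 4 * B :=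
      oscC v u hloc huv B hB (-1) 1 le_rfl (by norm_num) le_rfl
    have hcent := center_drift v u hloc huv B hB
    have : ((1:ℝ) - -1) = 2 := by norm_num
    rw [this] at h1
    nlinarith
  | succ n ih =>
    have e1 : ((2:ℝ) ^ (n + 1)) = 2 * 2 ^ n := by rw [pow_succ]; ring
    have e2 : ((2:ℝ) ^ (n + 1 + 1)) = 4 * 2 ^ n := by rw [pow_succ, pow_succ]; ring
    have hA : (1:ℝ) ≤ 2 ^ n := one_le_pow₀ (by norm_num)
    rw [e1] at ih
    have h := step_bound v u hloc hper huv B hB (2 ^ n) (1000 * B * 2 ^ n) hA ih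
    rw [e1, e2]
    have h2 : 1000 * B * 2 ^ n + 616 * B * 2 ^ n ≤ 1000 * B * (2 * 2 ^ n) := by
      nlinarith [mul_nonneg hB0 (le_trans zero_le_one hA)]
    linarith
lemma exists_pow_between (R : ℝ) (hR : 1 ≤ R) :
    ∃ n : ℕ, R ≤ 2 ^ n ∧ (2:ℝ) ^ n ≤ 2 * R := by
  classical
  have hex : ∃ n : ℕ, R ≤ (2:ℝ) ^ n := by
    obtain ⟨n, hn⟩ := pow_unbounded_of_one_lt R (by norm_num : (1:ℝ) < 2)
    exact ⟨n, hn.le⟩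
  refine ⟨Nat.find hex, Nat.find_spec hex, ?_⟩
  rcases Nat.eq_zero_or_pos (Nat.find hex) with h0 | hpos
  · rw [h0]
    norm_num
    linarith
  · obtain ⟨m, hm⟩ : ∃ m, Nat.find hex = m + 1 :=
      ⟨Nat.find hex - 1, by omega⟩
    have hlt : ¬ R ≤ (2:ℝ) ^ m := Nat.find_min hex (by omega)
    push_neg at hlt
    rw [hm, pow_succ]
    nlinarith

lemma global_bound (v u : ℝ → ℝ)
    (hloc : MeasureTheory.LocallyIntegrable v MeasureTheory.volume)
    (hper : ∀ θ : ℝ, v (θ + 2 * Real.pi) = v θ)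
    (huv : ∀ x, u x = v (cay x)) (B : ℝ)
    (hB : ∀ a b : ℝ, a < b → b - a ≤ 2 * Real.pi → meanOsc v a b ≤ B)
    (n : ℕ) (a b : ℝ) (hab : a < b) (h1 : -(2 ^ n : ℝ) ≤ a) (h2 : b ≤ 2 ^ n) :
    meanOsc u a b ≤ 2 * ((b - a)⁻¹ * (1000 * B * 2 ^ n)) := by
  set c := iavg u (2 ^ n) (2 ^ (n + 1)) with hc
  have hmono : (∫ x in a..b, |u x - c|) ≤ ∫ x in (-(2 ^ n : ℝ))..(2 ^ n : ℝ), |u x - c| :=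
    intervalIntegral.integral_mono_interval h1 hab.le h2
      (Filter.Eventually.of_forall (fun x => abs_nonneg _))
      (abs_sub_intervalIntegrable u _ _ c (comp_intervalIntegrable v hloc u huv _ _))
  have hd := dyadic_bound v u hloc hper huv B hB n
  have h := meanOsc_le_two u a b c hab (comp_intervalIntegrable v hloc u huv a b)
  have hba : (0:ℝ) < b - a := by linarith
  have hstep : (b - a)⁻¹ * (∫ x in a..b, |u x - c|) ≤ (b - a)⁻¹ * (1000 * B * 2 ^ n) :=
    mul_le_mul_of_nonneg_left (hmono.trans hd) (inv_nonneg.mpr hba.le)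
  linarith

/-- if `v ∈ VMO(𝕊)` on the unit circle (modelled by a `2π`-periodic
function of the angle, with BMO/VMO taken over arcs, i.e. intervals of length
at most `2π`), then `u = v ∘ T ∈ VMO(ℝ)`, where `T(x) = (x−i)/(x+i)` is the Cayley
transformation from ℝ into 𝕊 and `u(x) = v(arg T(x))`. -/
theorem stmt17 (v : ℝ → ℝ) (hper : ∀ θ : ℝ, v (θ + 2 * Real.pi) = v θ)
    (hloc : LocallyIntegrable v volume)
    (hBMOv : ∃ B : ℝ, ∀ a b : ℝ, a < b → b - a ≤ 2 * Real.pi → meanOsc v a b ≤ B)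
    (hVMOv : ∀ ε > (0:ℝ), ∃ δ > (0:ℝ), ∀ a b : ℝ, a < b → b - a < δ →
      meanOsc v a b < ε)
    (u : ℝ → ℝ)
    (hu : ∀ x : ℝ, u x = v (Complex.arg ((x - Complex.I) / (x + Complex.I)))) :
    (∃ B' : ℝ, ∀ a b : ℝ, a < b → meanOsc u a b ≤ B') ∧
    (∀ ε > (0:ℝ), ∃ δ > (0:ℝ), ∀ a b : ℝ, a < b → b - a < δ → meanOsc u a b < ε) := by
  have huv : ∀ x, u x = v (cay x) := by
    intro x
    rw [hu x]
    obtain ⟨t, ht, harg⟩ := cayley_arg x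
    rw [harg]
    rcases ht with rfl | rfl
    · rfl
    · exact hper (cay x)
  obtain ⟨B, hB⟩ := hBMOv
  have hB0 : 0 ≤ B := by
    have h := hB 0 1 one_pos (by nlinarith [Real.pi_gt_three])
    exact le_trans (meanOsc_nonneg v 0 1 one_pos.le) h
  constructor
  · -- BMO part
    refine ⟨8000 * B, ?_⟩
    intro a b hab
    by_cases hc1 : 0 < a ∧ b ≤ 2 * a
    · have h := oscP v u hloc huv B hB a b 4 hc1.1 hab (by nlinarith [hc1.1, hc1.2, hab])
      linarith
    by_cases hc2 : b < 0 ∧ 2 * b ≤ a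
    · have h := oscN v u hloc huv B hB a b 4 hc2.1 hab (by nlinarith [hc2.1, hc2.2, hab])
      linarith
    -- remaining case
    push_neg at hc1 hc2
    set R := max (|a|) (|b|) with hR
    have hRa : -R ≤ a := by
      have := neg_abs_le a
      have : -R ≤ -|a| := by
        apply neg_le_neg
        exact le_max_left _ _
      linarith [neg_abs_le a]
    have hRb : b ≤ R := le_trans (le_abs_self b) (le_max_right _ _)
    have hR2 : R ≤ 2 * (b - a) := by
      rcases le_or_gt a 0 with ha | ha
      · rcases le_or_gt 0 b with hb | hb
        · -- a ≤ 0 ≤ b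
          apply max_le
          · rw [abs_of_nonpos ha]; linarith
          · rw [abs_of_nonneg hb]; linarith
        · -- b < 0 : then a < 2 b
          have h2b := hc2 hb
          apply max_le
          · rw [abs_of_nonpos ha]; linarith
          · rw [abs_of_nonpos hb.le]; linarith
      · -- 0 < a : then 2 a < b
        have h2a := hc1 ha
        apply max_le
        · rw [abs_of_pos ha]; linarith
        · rw [abs_of_pos (lt_trans ha hab)]; linarith
    rcases le_or_gt R 1 with hRle | hRgt
    · -- small interval in [-1,1]
      have ha1 : -1 ≤ a := by
        have : -R ≤ a := hRa
        linarith
      have hb1 : b ≤ 1 := le_trans hRb hRle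
      have h := oscC v u hloc huv B hB a b ha1 hab hb1
      linarith
    · obtain ⟨n, hn1, hn2⟩ := exists_pow_between R hRgt.le
      have h := global_bound v u hloc hper huv B hB n a b hab
        (by linarith) (by linarith)
      have hba : (0:ℝ) < b - a := by linarith
      have hfac : (b - a)⁻¹ * (2 ^ n : ℝ) ≤ 4 := by
        rw [inv_mul_le_iff₀ hba]
        linarith
      have hfin : 2 * ((b - a)⁻¹ * (1000 * B * 2 ^ n)) ≤ 8000 * B := by
        have e : (b - a)⁻¹ * (1000 * B * 2 ^ n) = (1000 * B) * ((b - a)⁻¹ * 2 ^ n) := by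
          ring
        rw [e]
        nlinarith [mul_le_mul_of_nonneg_left hfac (by positivity : (0:ℝ) ≤ 1000 * B)]
      linarith
  · -- VMO part
    intro ε hε
    obtain ⟨δv, hδv, hδ⟩ := hVMOv (ε / 7) (by positivity)
    refine ⟨min 1 (δv / 2), by positivity, ?_⟩
    intro a b hab hlt
    have hle1 : b - a ≤ 1 := le_trans hlt.le (min_le_left _ _)
    have h6 := vmo_small v u hloc huv a b hab hle1
    have harc : cay b - cay a < δv := by
      have h1 := cay_arc_le_two_len a b hab.le
      have h2 : b - a < δv / 2 := lt_of_lt_of_le hlt (min_le_right _ _)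
      linarith
    have hv := hδ (cay a) (cay b) (cay_strictMono hab) harc
    linarith
end
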